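/- arXiv:1908.08909 — 5 statements merged into one kernel-verified Lean document; each statement's English description precedes it below -/
import Mathlib

section
/- Let D ≥ 1 and let μ be the rotation-invariant (uniform) probability measure on the unit sphere S = {u ∈ ℂ^D : ‖u‖ = 1}. For any two Hermitian D×D complex matrices A and B, ∫_S ⟨u, A u⟩ ⟨u, B u⟩ dμ(u) = (tr(A)·tr(B) + tr(A B)) / (D·(D+1)). -/
open MeasureTheory Matrix

noncomputable instance (D : ℕ) : MeasurableSpace (EuclideanSpace ℂ (Fin D)) :=
  MeasurableSpace.comap WithLp.ofLp MeasurableSpace.pi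
instance (D : ℕ) : BorelSpace (EuclideanSpace ℂ (Fin D)) := PiLp.borelSpace 2

/-- The quadratic form `⟨u, A u⟩` of a matrix `A` at a vector `u ∈ ℂ^D`,
with respect to the standard inner product on `ℂ^D`. -/
noncomputable def expval {D : ℕ} (A : Matrix (Fin D) (Fin D) ℂ)
    (u : EuclideanSpace ℂ (Fin D)) : ℂ :=
  inner ℂ u ((Matrix.toEuclideanLin A) u)

/-!
Invariance under multiplying one coordinate by the imaginary unit kills every fourth moment
`E[ū_i u_j ū_k u_l]` except those with `(i = j ∧ k = l)` or `(i = l ∧ j = k)`; invariance under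
coordinate permutations makes `E|u_a|⁴` independent of `a`, and invariance under a unitary mixing
two coordinates `a ≠ b` gives `E|u_a|⁴ = 2 E[|u_a|²|u_b|²]`. Hence
`E[ū_i u_j ū_k u_l] = c (δ_ij δ_kl + δ_il δ_jk)` for one constant `c`, and expanding the quadratic
forms gives `E[⟨u, A u⟩⟨u, B u⟩] = c (tr A tr B + tr (A B))`. For `A = B = 1` the left side is
`E‖u‖⁴ = 1`, which forces `c = 1 / (D (D + 1))`.
-/

open ComplexConjugate

namespace SecondMoment

variable {ι : Type*} [Fintype ι]

def IsUnitarilyInvariant (μ : Measure (EuclideanSpace ℂ ι)) : Prop :=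
  ∀ U : EuclideanSpace ℂ ι ≃ₗᵢ[ℂ] EuclideanSpace ℂ ι, μ.map U = μ

noncomputable def coordMonomial (i j k l : ι) (u : EuclideanSpace ℂ ι) : ℂ :=
  conj (u i) * u j * (conj (u k) * u l)

noncomputable def fourthMoment (μ : Measure (EuclideanSpace ℂ ι)) (i j k l : ι) : ℂ :=
  ∫ u, coordMonomial i j k l u ∂μ

def pairingDelta {R : Type*} [Semiring R] [DecidableEq ι] (i j k l : ι) : R :=
  (if i = j ∧ k = l then 1 else 0) + (if i = l ∧ j = k then 1 else 0)

variable {μ : Measure (EuclideanSpace ℂ ι)}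

theorem fourthMoment_eq_integral_comp (hμ : IsUnitarilyInvariant μ)
    (U : EuclideanSpace ℂ ι ≃ₗᵢ[ℂ] EuclideanSpace ℂ ι) (i j k l : ι) :
    fourthMoment μ i j k l = ∫ u, coordMonomial i j k l (U u) ∂μ :=
  (MeasurePreserving.integral_comp' (f := U.toHomeomorph.toMeasurableEquiv)
    ⟨U.continuous.measurable, hμ U⟩ _).symm

theorem integrable_coordMonomial [IsFiniteMeasure μ] (hsupp : ∀ᵐ u ∂μ, ‖u‖ = 1)
    (i j k l : ι) : Integrable (coordMonomial i j k l) μ := by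
  refine Integrable.mono' (integrable_const 1) (by unfold coordMonomial; fun_prop)
    (hsupp.mono fun u hu => ?_)
  have hcoord (n : ι) : ‖u n‖ ≤ 1 := hu ▸ PiLp.norm_apply_le u n
  simp only [coordMonomial, norm_mul, Complex.norm_conj]
  calc ‖u i‖ * ‖u j‖ * (‖u k‖ * ‖u l‖) ≤ 1 * 1 * (1 * 1) := by gcongr <;> apply hcoord
    _ = 1 := by norm_num

theorem integral_sum_mul_coordMonomial [IsFiniteMeasure μ] (hsupp : ∀ᵐ u ∂μ, ‖u‖ = 1)
    (c : ι → ι → ι → ι → ℂ) :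
    ∫ u, ∑ i, ∑ j, ∑ k, ∑ l, c i j k l * coordMonomial i j k l u ∂μ
      = ∑ i, ∑ j, ∑ k, ∑ l, c i j k l * fourthMoment μ i j k l := by
  have hint := integrable_coordMonomial hsupp (μ := μ)
  simp (disch := intros; fun_prop) only [integral_finsetSum, integral_const_mul]
  rfl

noncomputable def diagonalPhase (c : ι → unitary ℂ) :
    EuclideanSpace ℂ ι ≃ₗᵢ[ℂ] EuclideanSpace ℂ ι :=
  LinearIsometryEquiv.piLpCongrRight 2 fun n => c n • LinearIsometryEquiv.refl ℂ ℂ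

@[simp]
theorem diagonalPhase_apply (c : ι → unitary ℂ) (u : EuclideanSpace ℂ ι) (n : ι) :
    diagonalPhase c u n = c n * u n := rfl

theorem fourthMoment_eq_phase_mul (hμ : IsUnitarilyInvariant μ) (c : ι → unitary ℂ)
    (i j k l : ι) :
    fourthMoment μ i j k l
      = conj (c i : ℂ) * c j * (conj (c k : ℂ) * c l) * fourthMoment μ i j k l := by
  conv_lhs => rw [fourthMoment_eq_integral_comp hμ (diagonalPhase c)]
  rw [fourthMoment, ← integral_const_mul]
  congr 1 with u
  simp only [coordMonomial, diagonalPhase_apply, map_mul]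
  ring

theorem fourthMoment_eq_zero [DecidableEq ι] (hμ : IsUnitarilyInvariant μ) {i j k l : ι}
    (h : ¬((i = j ∧ k = l) ∨ (i = l ∧ j = k))) : fourthMoment μ i j k l = 0 := by
  let phaseI (p : ι) : ι → unitary ℂ :=
    Pi.mulSingle p ⟨Complex.I, by simp [Unitary.mem_iff, Complex.conj_I]⟩
  suffices ∃ p, conj (phaseI p i : ℂ) * phaseI p j * (conj (phaseI p k : ℂ) * phaseI p l) ≠ 1 by
    obtain ⟨p, hp⟩ := this
    have h := fourthMoment_eq_phase_mul hμ (phaseI p) i j k l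
    exact (mul_left_eq_self₀.1 h.symm).resolve_left hp
  simp only [phaseI, Pi.mulSingle_apply, apply_ite Subtype.val, apply_ite conj]
  by_cases hij : i = j
  · subst hij
    have hlk : l ≠ k := fun hlk => h (Or.inl ⟨rfl, hlk.symm⟩)
    refine ⟨k, ?_⟩
    split_ifs <;> simp_all [Complex.ext_iff]
  by_cases hil : i = l
  · subst hil
    have hkj : k ≠ j := fun hkj => h (Or.inr ⟨rfl, hkj.symm⟩)
    refine ⟨j, ?_⟩
    split_ifs <;> simp_all [Complex.ext_iff]
  · refine ⟨i, ?_⟩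
    simp only [if_neg (Ne.symm hij), if_neg (Ne.symm hil)]
    split_ifs <;> norm_num [Complex.ext_iff]

theorem fourthMoment_perm (hμ : IsUnitarilyInvariant μ) (σ : Equiv.Perm ι) (i j k l : ι) :
    fourthMoment μ (σ i) (σ j) (σ k) (σ l) = fourthMoment μ i j k l := by
  conv_rhs => rw [fourthMoment_eq_integral_comp hμ (.piLpCongrLeft 2 ℂ ℂ σ.symm)]
  simp [fourthMoment, coordMonomial, LinearIsometryEquiv.piLpCongrLeft_apply,
    Equiv.piCongrLeft'_apply]

theorem reflection_span_single_add_single_apply [DecidableEq ι] {a b : ι} (hab : a ≠ b)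
    (u : EuclideanSpace ℂ ι) :
    (ℂ ∙ (EuclideanSpace.single a 1 + EuclideanSpace.single b 2 :
      EuclideanSpace ℂ ι)).reflection u a = (4 * u b - 3 * u a) / 5 := by
  set w : EuclideanSpace ℂ ι := EuclideanSpace.single a 1 + EuclideanSpace.single b 2
  have hw : inner ℂ w w = 5 := by
    simp only [w, inner_add_left, EuclideanSpace.inner_single_left]
    simp [hab, hab.symm, map_ofNat]
    norm_num
  rw [Submodule.reflection_singleton_apply, ← inner_self_eq_norm_sq_to_K, hw]
  simp only [w, inner_add_left, EuclideanSpace.inner_single_left]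
  simp [hab, map_ofNat]
  ring

/-- Coordinates `a` and `b` are mixed by the reflection in the line through `e_a + 2 e_b`, whose
rational coefficients `(-3/5, 4/5)` avoid the `√2` of a Hadamard rotation. -/
theorem fourthMoment_diag_eq_two_mul [DecidableEq ι] [IsFiniteMeasure μ]
    (hsupp : ∀ᵐ u ∂μ, ‖u‖ = 1) (hμ : IsUnitarilyInvariant μ) {a b : ι} (hab : a ≠ b) :
    fourthMoment μ a a a a = 2 * fourthMoment μ a a b b := by
  set R := (ℂ ∙ (EuclideanSpace.single a 1 + EuclideanSpace.single b 2 :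
    EuclideanSpace ℂ ι)).reflection
  have hint := integrable_coordMonomial hsupp (μ := μ)
  have hexpand (u : EuclideanSpace ℂ ι) : coordMonomial a a a a (R u) =
      (81 * coordMonomial a a a a u + 256 * coordMonomial b b b b u
        + 576 * coordMonomial a a b b u
        + 144 * (coordMonomial a b a b u + coordMonomial b a b a u)
        - 216 * (coordMonomial a a a b u + coordMonomial a a b a u)
        - 384 * (coordMonomial b b a b u + coordMonomial b b b a u)) / 625 := by
    simp only [coordMonomial, R, reflection_span_single_add_single_apply hab, map_div₀, map_sub,
      map_mul, map_ofNat]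
    ring
  have h := fourthMoment_eq_integral_comp hμ R a a a a
  simp only [hexpand] at h
  rw [integral_div] at h
  simp (disch := fun_prop) only [integral_add, integral_sub, integral_const_mul] at h
  simp only [← fourthMoment.eq_1] at h
  simp (disch := simp [hab, hab.symm]) only [fourthMoment_eq_zero hμ] at h
  have hb : fourthMoment μ b b b b = fourthMoment μ a a a a := by
    simpa using fourthMoment_perm hμ (Equiv.swap a b) a a a a
  rw [hb] at h
  linear_combination (625 / 288 : ℂ) * h

theorem exists_fourthMoment_eq_mul_pairingDelta [DecidableEq ι] [IsFiniteMeasure μ]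
    (hsupp : ∀ᵐ u ∂μ, ‖u‖ = 1) (hμ : IsUnitarilyInvariant μ) :
    ∃ c : ℂ, ∀ i j k l, fourthMoment μ i j k l = c * pairingDelta i j k l := by
  rcases isEmpty_or_nonempty ι with hι | ⟨⟨i₀⟩⟩
  · exact ⟨0, fun i => isEmptyElim i⟩
  refine ⟨fourthMoment μ i₀ i₀ i₀ i₀ / 2, fun i j k l => ?_⟩
  have hdiag (i : ι) : fourthMoment μ i i i i = fourthMoment μ i₀ i₀ i₀ i₀ := by
    simpa using fourthMoment_perm hμ (Equiv.swap i₀ i) i₀ i₀ i₀ i₀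
  have hpair (i k : ι) : fourthMoment μ i i k k
      = fourthMoment μ i₀ i₀ i₀ i₀ / 2 * (1 + if i = k then 1 else 0) := by
    by_cases hik : i = k
    · subst hik
      rw [hdiag]
      norm_num
    · rw [← hdiag i, fourthMoment_diag_eq_two_mul hsupp hμ hik, if_neg hik]
      ring
  by_cases hij : i = j ∧ k = l
  · obtain ⟨rfl, rfl⟩ := hij
    rw [hpair]
    simp [pairingDelta]
  by_cases hil : i = l ∧ j = k
  · obtain ⟨rfl, rfl⟩ := hil
    have hswap : fourthMoment μ i j j i = fourthMoment μ i i j j := by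
      simp only [fourthMoment, coordMonomial]
      congr 1 with u
      ring
    have hne : i ≠ j := fun h => hij ⟨h, h.symm⟩
    rw [hswap, hpair]
    simp [pairingDelta, hne]
  · rw [fourthMoment_eq_zero hμ (not_or.2 ⟨hij, hil⟩)]
    simp [pairingDelta, hij, hil]

theorem trace_mul_trace_add_trace_mul_eq_sum [DecidableEq ι] {R : Type*} [CommSemiring R]
    (A B : Matrix ι ι R) :
    A.trace * B.trace + (A * B).trace
      = ∑ i, ∑ j, ∑ k, ∑ l, A i j * B k l * pairingDelta i j k l := by
  simp [pairingDelta, mul_add, Finset.sum_add_distrib, ite_and, Matrix.trace, Matrix.mul_apply,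
    Finset.sum_mul_sum]

theorem expval_eq_sum {D : ℕ} (A : Matrix (Fin D) (Fin D) ℂ) (u : EuclideanSpace ℂ (Fin D)) :
    expval A u = ∑ i, ∑ j, A i j * (conj (u i) * u j) := by
  simp only [expval, PiLp.inner_apply, RCLike.inner_apply, Matrix.toLpLin_apply,
    Matrix.mulVec, dotProduct, Finset.sum_mul]
  congr! 2 with i - j -
  ring

theorem expval_mul_expval {D : ℕ} (A B : Matrix (Fin D) (Fin D) ℂ)
    (u : EuclideanSpace ℂ (Fin D)) :
    expval A u * expval B u
      = ∑ i, ∑ j, ∑ k, ∑ l, A i j * B k l * coordMonomial i j k l u := by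
  simp only [expval_eq_sum, Finset.sum_mul]
  simp only [Finset.mul_sum, coordMonomial]
  congr! 4 with i - j - k - l -
  ring

theorem integral_expval_mul_expval {D : ℕ} {μ : Measure (EuclideanSpace ℂ (Fin D))}
    [IsFiniteMeasure μ] (hsupp : ∀ᵐ u ∂μ, ‖u‖ = 1) {c : ℂ}
    (hc : ∀ i j k l, fourthMoment μ i j k l = c * pairingDelta i j k l)
    (A B : Matrix (Fin D) (Fin D) ℂ) :
    ∫ u, expval A u * expval B u ∂μ = c * (A.trace * B.trace + (A * B).trace) := by
  simp only [expval_mul_expval, integral_sum_mul_coordMonomial hsupp, hc,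
    trace_mul_trace_add_trace_mul_eq_sum, Finset.mul_sum]
  congr! 4 with i - j - k - l -
  ring

end SecondMoment

theorem second_moment_identity_general (D : ℕ)
    (μ : Measure (EuclideanSpace ℂ (Fin D))) [IsProbabilityMeasure μ]
    (hsupp : ∀ᵐ u ∂μ, ‖u‖ = 1)
    (hinv : ∀ U : EuclideanSpace ℂ (Fin D) ≃ₗᵢ[ℂ] EuclideanSpace ℂ (Fin D),
      μ.map U = μ)
    (A B : Matrix (Fin D) (Fin D) ℂ) :
    ∫ u, expval A u * expval B u ∂μ
      = (A.trace * B.trace + (A * B).trace) / ((D : ℂ) * ((D : ℂ) + 1)) := by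
  obtain ⟨c, hc⟩ := SecondMoment.exists_fourthMoment_eq_mul_pairingDelta hsupp hinv
  have hmoment := SecondMoment.integral_expval_mul_expval hsupp hc
  have hnorm : c * (D * D + D) = 1 := by
    have hsq : ∀ᵐ u ∂μ, expval 1 u * expval 1 u = 1 :=
      hsupp.mono fun u hu => by simp [expval, hu]
    simpa [hmoment] using integral_congr_ae hsq
  rw [hmoment, eq_one_div_of_mul_eq_one_left hnorm]
  ring

/-- second-moment identity for uniformly random pure states:
for the rotation-invariant (uniform) probability measure `μ` on the unit sphere of `ℂ^D`
and Hermitian matrices `A`, `B`,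
`∫ ⟨u,Au⟩⟨u,Bu⟩ dμ(u) = (tr A · tr B + tr (AB)) / (D(D+1))`. -/
theorem second_moment_identity (D : ℕ) (hD : 1 ≤ D)
    (μ : Measure (EuclideanSpace ℂ (Fin D))) [IsProbabilityMeasure μ]
    (hsupp : ∀ᵐ u ∂μ, ‖u‖ = 1)
    (hinv : ∀ U : EuclideanSpace ℂ (Fin D) ≃ₗᵢ[ℂ] EuclideanSpace ℂ (Fin D),
      μ.map U = μ)
    (A B : Matrix (Fin D) (Fin D) ℂ) (hA : A.IsHermitian) (hB : B.IsHermitian) :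
    ∫ u, expval A u * expval B u ∂μ
      = (A.trace * B.trace + (A * B).trace) / ((D : ℂ) * ((D : ℂ) + 1)) :=
  second_moment_identity_general D μ hsupp hinv A B
end

section
/- Let D ≥ 1 and let μ be the rotation-invariant (uniform) probability measure on the unit sphere S = {u ∈ ℂ^D : ‖u‖ = 1}. For any Hermitian D×D complex matrix A, the matrix-valued integral satisfies D·(D+1)·∫_S ⟨u, A u⟩ · (u u*) dμ(u) = A + tr(A)·I, where u u* denotes the rank-one matrix with entries u_i·conj(u_j) and I is the D×D identity matrix. -/
open MeasureTheory Matrix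

/-!
The fourth moments `E[u_a ū_b u_c ū_d]` are pinned down by three kinds of unitaries.
Multiplying one coordinate by `i` shows that they vanish unless `{a, c} = {b, d}` as multisets.
A unitary mixing two coordinates `a ≠ b` with real entries `p, q`, composed with the phases
`iⁿ` on coordinate `a` and averaged over `n` (which kills every cross term), gives
`E|u_a|⁴ = p⁴ E|u_a|⁴ + q⁴ E|u_b|⁴ + 4 p² q² E|u_a|²|u_b|²`; for the entries `3/5, 4/5` this
forces `E|u_a|⁴ = E|u_b|⁴ = 2 E|u_a|²|u_b|²`. The normalisation `‖u‖⁴ = 1` then yields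
`D (D + 1) E|u_a|²|u_c|² = 1 + δ_ac`, and contracting with `A` gives the identity.
-/

open ComplexConjugate

theorem integral_comp_linearIsometryEquiv {𝕜 E F : Type*} [RCLike 𝕜] [NormedAddCommGroup E]
    [NormedSpace 𝕜 E] [MeasurableSpace E] [BorelSpace E] [NormedAddCommGroup F] [NormedSpace ℝ F]
    {μ : Measure E} (U : E ≃ₗᵢ[𝕜] E) (hU : μ.map U = μ) (f : E → F) :
    ∫ x, f (U x) ∂μ = ∫ x, f x ∂μ := by
  conv_rhs => rw [← hU]
  exact (integral_map_equiv U.toHomeomorph.toMeasurableEquiv f).symm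

theorem Continuous.integrable_of_ae_mem_compact {E F : Type*} [TopologicalSpace E]
    [T2Space E] [MeasurableSpace E] [OpensMeasurableSpace E] [NormedAddCommGroup F]
    {μ : Measure E} [IsFiniteMeasure μ] {K : Set E} (hK : IsCompact K)
    (hμ : ∀ᵐ x ∂μ, x ∈ K) {f : E → F} (hf : Continuous f) : Integrable f μ := by
  rw [← Measure.restrict_eq_self_of_ae_mem hμ]
  exact hf.continuousOn.integrableOn_compact hK

theorem sum_range_four_mul_I_pow (p q : ℝ) (x y : ℂ) :
    ∑ n ∈ Finset.range 4, (p * Complex.I ^ n * x + q * y) * conj (p * Complex.I ^ n * x + q * y) *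
      ((p * Complex.I ^ n * x + q * y) * conj (p * Complex.I ^ n * x + q * y)) =
    4 * (p ^ 4 * (x * conj x * (x * conj x)) + q ^ 4 * (y * conj y * (y * conj y)) +
      4 * p ^ 2 * q ^ 2 * (x * conj x * (y * conj y))) := by
  simp only [Finset.sum_range_succ, Finset.sum_range_zero, pow_zero, pow_one, Complex.I_sq,
    Complex.I_pow_three, map_add, map_mul, map_neg, map_one, Complex.conj_ofReal, Complex.conj_I]
  ring_nf
  simp only [Complex.I_sq, Complex.I_pow_four]
  ring

noncomputable def unitaryI : unitary ℂ := ⟨Complex.I, by simp [Unitary.mem_iff]⟩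

theorem exists_mulSingle_I_ne_one {ι : Type*} [DecidableEq ι] {a b c d : ι}
    (h : ¬((a = b ∧ c = d) ∨ (a = d ∧ c = b))) :
    ∃ m : ι, let f : ι → ℂ := Pi.mulSingle m Complex.I
      f a * conj (f b) * (f c * conj (f d)) ≠ 1 := by
  by_cases hab : a = b
  · subst hab
    have hcd : c ≠ d := fun h' => h (Or.inl ⟨rfl, h'⟩)
    refine ⟨c, ?_⟩
    by_cases hac : a = c <;> simp [hac, hcd, Complex.ext_iff]
  · by_cases had : a = d
    · subst had
      have hcb : c ≠ b := fun h' => h (Or.inr ⟨rfl, h'⟩)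
      refine ⟨c, ?_⟩
      by_cases hac : a = c <;> simp [hac, hcb, Complex.ext_iff]
    · refine ⟨a, ?_⟩
      by_cases hca : c = a <;> norm_num [hca, Ne.symm hab, Ne.symm had, Complex.ext_iff]

namespace EuclideanSpace

variable {ι : Type*} [Fintype ι] [DecidableEq ι]

noncomputable def phaseAt (m : ι) (z : unitary ℂ) : EuclideanSpace ℂ ι ≃ₗᵢ[ℂ] EuclideanSpace ℂ ι :=
  LinearIsometryEquiv.piLpCongrRight 2 fun k =>
    Unitary.mulLeft ℂ ℂ ((Pi.mulSingle m z : ι → unitary ℂ) k)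

theorem phaseAt_apply (m : ι) (z : unitary ℂ) (u : EuclideanSpace ℂ ι) (k : ι) :
    phaseAt m z u k = (Pi.mulSingle m (z : ℂ) : ι → ℂ) k * u k := by
  by_cases h : k = m
  · subst h; simp [phaseAt]
  · simp [phaseAt, h]

/-- Any unitary mixing the coordinates `a` and `b` would do; this reflection has rational
entries. -/
noncomputable def mixing (a b : ι) : EuclideanSpace ℂ ι ≃ₗᵢ[ℂ] EuclideanSpace ℂ ι :=
  (ℂ ∙ (single a 1 + single b 2)).reflection

theorem mixing_apply {a b : ι} (hab : a ≠ b) (u : EuclideanSpace ℂ ι) (k : ι) :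
    mixing a b u k =
      2 / 5 * (u a + 2 * u b) * ((if k = a then 1 else 0) + (if k = b then 2 else 0)) - u k := by
  have hnorm : (RCLike.ofReal ‖single a (1 : ℂ) + single b 2‖ : ℂ) ^ 2 = 5 := by
    rw [← inner_self_eq_norm_sq_to_K, inner_add_left, inner_single_left, inner_single_left]
    simp [hab, hab.symm, map_ofNat]
    norm_num
  rw [mixing, Submodule.reflection_singleton_apply, hnorm]
  simp [inner_add_left, inner_single_left, PiLp.single_apply, map_ofNat]
  split_ifs <;> simp_all <;> ring

theorem mixing_apply_left {a b : ι} (hab : a ≠ b) (u : EuclideanSpace ℂ ι) :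
    mixing a b u a = ((-3 / 5 : ℝ) : ℂ) * u a + ((4 / 5 : ℝ) : ℂ) * u b := by
  rw [mixing_apply hab]; simp [hab]; ring

theorem mixing_apply_right {a b : ι} (hab : a ≠ b) (u : EuclideanSpace ℂ ι) :
    mixing a b u b = ((4 / 5 : ℝ) : ℂ) * u a + ((3 / 5 : ℝ) : ℂ) * u b := by
  rw [mixing_apply hab]; simp [hab.symm]; ring

end EuclideanSpace

open EuclideanSpace

section FourthMoment

variable {D : ℕ}

def IsUnitarilyInvariant (μ : Measure (EuclideanSpace ℂ (Fin D))) : Prop :=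
  ∀ U : EuclideanSpace ℂ (Fin D) ≃ₗᵢ[ℂ] EuclideanSpace ℂ (Fin D), μ.map U = μ

noncomputable def fourthMoment (μ : Measure (EuclideanSpace ℂ (Fin D))) (a b c d : Fin D) : ℂ :=
  ∫ u, u a * conj (u b) * (u c * conj (u d)) ∂μ

variable {μ : Measure (EuclideanSpace ℂ (Fin D))}

theorem fourthMoment_swap (a c : Fin D) : fourthMoment μ a c c a = fourthMoment μ a a c c := by
  unfold fourthMoment
  congr 1 with u
  ring

theorem fourthMoment_eq_phase_mul_self (hinv : IsUnitarilyInvariant μ) (m : Fin D)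
    (z : unitary ℂ) (a b c d : Fin D) :
    let f : Fin D → ℂ := Pi.mulSingle m (z : ℂ)
    fourthMoment μ a b c d = f a * conj (f b) * (f c * conj (f d)) * fourthMoment μ a b c d := by
  intro f
  conv_lhs => rw [fourthMoment, ← integral_comp_linearIsometryEquiv (phaseAt m z) (hinv _)]
  rw [fourthMoment, ← integral_const_mul]
  congr 1 with u
  simp only [phaseAt_apply, map_mul]
  ring

theorem fourthMoment_eq_zero (hinv : IsUnitarilyInvariant μ) {a b c d : Fin D}
    (h : ¬((a = b ∧ c = d) ∨ (a = d ∧ c = b))) : fourthMoment μ a b c d = 0 := by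
  obtain ⟨m, hm⟩ := exists_mulSingle_I_ne_one h
  by_contra hT
  exact hm ((mul_eq_right₀ hT).mp (fourthMoment_eq_phase_mul_self hinv m unitaryI a b c d).symm)

variable [IsProbabilityMeasure μ]

theorem integrable_of_continuous (hsupp : ∀ᵐ u ∂μ, ‖u‖ = 1)
    {f : EuclideanSpace ℂ (Fin D) → ℂ} (hf : Continuous f) : Integrable f μ :=
  hf.integrable_of_ae_mem_compact (isCompact_sphere 0 1)
    (hsupp.mono fun _ hu => mem_sphere_zero_iff_norm.2 hu)

theorem integrable_monomial (hsupp : ∀ᵐ u ∂μ, ‖u‖ = 1) (a b c d : Fin D) :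
    Integrable (fun u : EuclideanSpace ℂ (Fin D) => u a * conj (u b) * (u c * conj (u d))) μ :=
  integrable_of_continuous hsupp (by fun_prop)

theorem integral_add_add_fourthMoment (hsupp : ∀ᵐ u ∂μ, ‖u‖ = 1) (a b : Fin D) (r s t : ℂ) :
    ∫ u, r * (u a * conj (u a) * (u a * conj (u a))) + s * (u b * conj (u b) * (u b * conj (u b)))
      + t * (u a * conj (u a) * (u b * conj (u b))) ∂μ =
    r * fourthMoment μ a a a a + s * fourthMoment μ b b b b + t * fourthMoment μ a a b b := by
  have hmono := integrable_monomial hsupp (μ := μ)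
  have hr := (hmono a a a a).const_mul r
  have hs := (hmono b b b b).const_mul s
  have hrs : Integrable (fun u : EuclideanSpace ℂ (Fin D) =>
      r * (u a * conj (u a) * (u a * conj (u a))) +
        s * (u b * conj (u b) * (u b * conj (u b)))) μ := hr.add hs
  rw [integral_add hrs ((hmono a a b b).const_mul t), integral_add hr hs,
    integral_const_mul, integral_const_mul, integral_const_mul]
  rfl

theorem fourthMoment_diag_eq_of_coord_eq (hsupp : ∀ᵐ u ∂μ, ‖u‖ = 1)
    (hinv : IsUnitarilyInvariant μ) (U : EuclideanSpace ℂ (Fin D) ≃ₗᵢ[ℂ] EuclideanSpace ℂ (Fin D))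
    {a b k : Fin D} (hab : a ≠ b) (p q : ℝ) (hU : ∀ u, U u k = p * u a + q * u b) :
    fourthMoment μ k k k k = p ^ 4 * fourthMoment μ a a a a + q ^ 4 * fourthMoment μ b b b b +
      4 * p ^ 2 * q ^ 2 * fourthMoment μ a a b b := by
  set g : ℂ → ℂ := fun w => w * conj w * (w * conj w)
  have hphase : ∀ n : ℕ, fourthMoment μ k k k k =
      ∫ u, g (p * Complex.I ^ n * u a + q * u b) ∂μ := by
    intro n
    rw [fourthMoment, ← integral_comp_linearIsometryEquiv U (hinv _),
      ← integral_comp_linearIsometryEquiv (phaseAt a (unitaryI ^ n)) (hinv _)]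
    congr 1 with u
    simp [g, hU, phaseAt_apply, hab.symm, unitaryI, mul_assoc]
  have hint : ∀ n : ℕ, Integrable (fun u : EuclideanSpace ℂ (Fin D) =>
      g (p * Complex.I ^ n * u a + q * u b)) μ :=
    fun n => integrable_of_continuous hsupp (by fun_prop)
  refine mul_left_cancel₀ (by norm_num : (4 : ℂ) ≠ 0) ?_
  calc 4 * fourthMoment μ k k k k
      = ∑ n ∈ Finset.range 4, ∫ u, g (p * Complex.I ^ n * u a + q * u b) ∂μ := by
        simp [← hphase]
    _ = ∫ u, ∑ n ∈ Finset.range 4, g (p * Complex.I ^ n * u a + q * u b) ∂μ :=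
        (integral_finsetSum _ fun n _ => hint n).symm
    _ = _ := by
        simp only [g, sum_range_four_mul_I_pow]
        rw [integral_const_mul, integral_add_add_fourthMoment hsupp]

theorem fourthMoment_diag_eq (hsupp : ∀ᵐ u ∂μ, ‖u‖ = 1) (hinv : IsUnitarilyInvariant μ)
    (a b : Fin D) : fourthMoment μ a a a a = fourthMoment μ b b b b := by
  rcases eq_or_ne a b with rfl | hab
  · rfl
  have ha := fourthMoment_diag_eq_of_coord_eq hsupp hinv _ hab _ _ (mixing_apply_left hab)
  have hb := fourthMoment_diag_eq_of_coord_eq hsupp hinv _ hab _ _ (mixing_apply_right hab)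
  push_cast at ha hb
  linear_combination (25 / 32 : ℂ) * (ha - hb)

theorem fourthMoment_diag_eq_two_mul (hsupp : ∀ᵐ u ∂μ, ‖u‖ = 1) (hinv : IsUnitarilyInvariant μ)
    {a b : Fin D} (hab : a ≠ b) : fourthMoment μ a a a a = 2 * fourthMoment μ a a b b := by
  have ha := fourthMoment_diag_eq_of_coord_eq hsupp hinv _ hab _ _ (mixing_apply_left hab)
  push_cast at ha
  linear_combination (625 / 288 : ℂ) * ha - (8 / 9 : ℂ) * fourthMoment_diag_eq hsupp hinv a b

theorem sum_fourthMoment_eq_one (hsupp : ∀ᵐ u ∂μ, ‖u‖ = 1) :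
    ∑ a, ∑ c, fourthMoment μ a a c c = 1 := by
  have hmono := integrable_monomial hsupp (μ := μ)
  have hnorm : ∀ u : EuclideanSpace ℂ (Fin D), ∑ a, u a * conj (u a) = ((‖u‖ ^ 2 : ℝ) : ℂ) := by
    intro u
    simp [EuclideanSpace.norm_sq_eq, Complex.mul_conj, Complex.normSq_eq_norm_sq]
  calc ∑ a, ∑ c, fourthMoment μ a a c c
      = ∫ u, ∑ a, ∑ c, u a * conj (u a) * (u c * conj (u c)) ∂μ := by
        rw [integral_finsetSum _ fun a _ => integrable_finsetSum _ fun c _ => hmono a a c c]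
        simp only [fourthMoment]
        congr 1 with a
        rw [integral_finsetSum _ fun c _ => hmono a a c c]
    _ = ∫ _u, (1 : ℂ) ∂μ := by
        refine integral_congr_ae (hsupp.mono fun u hu => ?_)
        simp only [← Finset.sum_mul_sum, hnorm, hu]
        norm_num
    _ = 1 := by simp

theorem mul_fourthMoment_pair (hsupp : ∀ᵐ u ∂μ, ‖u‖ = 1) (hinv : IsUnitarilyInvariant μ)
    (a c : Fin D) : (D : ℂ) * (D + 1) * fourthMoment μ a a c c = 1 + if a = c then 1 else 0 := by
  obtain ⟨α, hα⟩ : ∃ α, fourthMoment μ a a a a = α := ⟨_, rfl⟩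
  have hT : ∀ x y, fourthMoment μ x x y y = α / 2 * (1 + if x = y then 1 else 0) := by
    intro x y
    rcases eq_or_ne x y with rfl | hxy
    · rw [fourthMoment_diag_eq hsupp hinv x a, hα]; simp; ring
    · rw [← hα, ← fourthMoment_diag_eq hsupp hinv x a, fourthMoment_diag_eq_two_mul hsupp hinv hxy]
      simp [hxy]
  have hsum := sum_fourthMoment_eq_one hsupp (μ := μ)
  simp only [hT, ← Finset.mul_sum, Finset.sum_add_distrib, Finset.sum_const, Finset.card_univ,
    Fintype.card_fin, Finset.sum_ite_eq, Finset.mem_univ, if_true, nsmul_eq_mul, mul_one] at hsum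
  rw [hT]
  linear_combination (1 + if a = c then (1 : ℂ) else 0) * hsum

theorem mul_fourthMoment (hsupp : ∀ᵐ u ∂μ, ‖u‖ = 1) (hinv : IsUnitarilyInvariant μ)
    (a b c d : Fin D) :
    (D : ℂ) * (D + 1) * fourthMoment μ a b c d =
      (if a = b ∧ c = d then 1 else 0) + (if a = d ∧ c = b then 1 else 0) := by
  by_cases h : (a = b ∧ c = d) ∨ (a = d ∧ c = b)
  · rcases h with ⟨rfl, rfl⟩ | ⟨rfl, rfl⟩
    · rw [mul_fourthMoment_pair hsupp hinv]
      simp [eq_comm]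
    · rw [fourthMoment_swap, mul_fourthMoment_pair hsupp hinv]
      by_cases hac : a = c <;> simp [hac, eq_comm]
  · rw [fourthMoment_eq_zero hinv h]
    rw [not_or] at h
    simp [h.1, h.2]

theorem expval_eq_sum (A : Matrix (Fin D) (Fin D) ℂ) (u : EuclideanSpace ℂ (Fin D)) :
    expval A u = ∑ k, ∑ l, A k l * (u l * conj (u k)) := by
  simp only [expval, Matrix.toLpLin_apply, PiLp.inner_apply, RCLike.inner_apply, mulVec,
    dotProduct, Finset.sum_mul, mul_assoc]

theorem integral_expval_mul (hsupp : ∀ᵐ u ∂μ, ‖u‖ = 1) (A : Matrix (Fin D) (Fin D) ℂ)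
    (i j : Fin D) :
    ∫ u, expval A u * (u i * conj (u j)) ∂μ = ∑ k, ∑ l, A k l * fourthMoment μ l k i j := by
  have hmono := integrable_monomial hsupp (μ := μ)
  have hpt : ∀ u : EuclideanSpace ℂ (Fin D), expval A u * (u i * conj (u j)) =
      ∑ k, ∑ l, A k l * (u l * conj (u k) * (u i * conj (u j))) := by
    simp [expval_eq_sum, Finset.sum_mul, mul_assoc]
  simp_rw [hpt]
  refine (integral_finsetSum _ fun k _ => integrable_finsetSum _ fun l _ =>
    (hmono l k i j).const_mul (A k l)).trans (Finset.sum_congr rfl fun k _ => ?_)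
  refine (integral_finsetSum _ fun l _ => (hmono l k i j).const_mul (A k l)).trans
    (Finset.sum_congr rfl fun l _ => ?_)
  exact integral_const_mul _ _

end FourthMoment

theorem second_moment_operator_identity_general (D : ℕ)
    (μ : Measure (EuclideanSpace ℂ (Fin D))) [IsProbabilityMeasure μ]
    (hsupp : ∀ᵐ u ∂μ, ‖u‖ = 1)
    (hinv : ∀ U : EuclideanSpace ℂ (Fin D) ≃ₗᵢ[ℂ] EuclideanSpace ℂ (Fin D),
      μ.map U = μ)
    (A : Matrix (Fin D) (Fin D) ℂ) :
    ∀ i j : Fin D,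
      ((D : ℂ) * ((D : ℂ) + 1)) * ∫ u, expval A u * (u i * (starRingEnd ℂ) (u j)) ∂μ
        = (A + A.trace • (1 : Matrix (Fin D) (Fin D) ℂ)) i j := by
  intro i j
  rw [integral_expval_mul hsupp, Finset.mul_sum]
  simp only [Finset.mul_sum, mul_left_comm _ (A _ _), mul_fourthMoment hsupp hinv]
  simp [mul_add, Finset.sum_add_distrib, ite_and, Matrix.trace, Matrix.one_apply, add_comm]

/-- (operator form of the second-moment identity), stated entrywise:
for the rotation-invariant (uniform) probability measure `μ` on the unit sphere of `ℂ^D`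
and a Hermitian matrix `A`,
`D(D+1) ∫ ⟨u,Au⟩ · (u u*) dμ(u) = A + tr(A)·I`,
where `(u u*) i j = u i · conj (u j)`. -/
theorem second_moment_operator_identity (D : ℕ) (hD : 1 ≤ D)
    (μ : Measure (EuclideanSpace ℂ (Fin D))) [IsProbabilityMeasure μ]
    (hsupp : ∀ᵐ u ∂μ, ‖u‖ = 1)
    (hinv : ∀ U : EuclideanSpace ℂ (Fin D) ≃ₗᵢ[ℂ] EuclideanSpace ℂ (Fin D),
      μ.map U = μ)
    (A : Matrix (Fin D) (Fin D) ℂ) (hA : A.IsHermitian) :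
    ∀ i j : Fin D,
      ((D : ℂ) * ((D : ℂ) + 1)) * ∫ u, expval A u * (u i * (starRingEnd ℂ) (u j)) ∂μ
        = (A + A.trace • (1 : Matrix (Fin D) (Fin D) ℂ)) i j :=
  second_moment_operator_identity_general D μ hsupp hinv A
end

section
/- Let X_1, X_2, … be i.i.d. real-valued random variables with mean m and variance σ². Fix ε > 0 and an integer K ≥ 1, and group the first N = K·B samples into K disjoint batches of size B each, where B ≥ 34·σ²/ε². Let μ̂_k denote the empirical mean of the k-th batch, k = 1, …, K. Then the probability that at least K/2 of the batch means satisfy |μ̂_k − m| > ε is at most 2·e^{−K/2}. In particular, any median μ̂(N,K) of μ̂_1, …, μ̂_K satisfies Pr[|μ̂(N,K) − m| > ε] ≤ 2·e^{−K/2}. -/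
/-!
Each batch mean has mean `m` and variance `σ² / B ≤ ε² / 34`, so by Chebyshev it is `ε`-far from
`m` with probability at most `p = 1/34`. Batches use disjoint samples, so the batch means are
independent, and the probability that some `c = ⌈K/2⌉` of them are all far is at most
`(K choose c) p^c ≤ 2^K p^c ≤ (4p)^c ≤ e^{-c} ≤ e^{-K/2}`, because `4/34 < 1/e`.
A median `ε`-far from `m` forces at least `c` batch means beyond it, hence `ε`-far as well.
-/

open MeasureTheory ProbabilityTheory Finset

section SampleMean

variable {Ω ι : Type*} [MeasurableSpace Ω] {P : Measure Ω} {Y : ι → Ω → ℝ} {s : Finset ι}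
  {m σ : ℝ}

lemma integral_sum_div_card (hs : s.Nonempty) (hint : ∀ i ∈ s, Integrable (Y i) P)
    (hmean : ∀ i ∈ s, ∫ ω, Y i ω ∂P = m) :
    ∫ ω, (∑ i ∈ s, Y i ω) / #s ∂P = m := by
  have hcard : (#s : ℝ) ≠ 0 := by exact_mod_cast hs.card_ne_zero
  rw [integral_div, integral_finsetSum s hint, sum_congr rfl hmean, sum_const, nsmul_eq_mul,
    mul_div_cancel_left₀ m hcard]

lemma variance_sum_div_card (hL2 : ∀ i ∈ s, MemLp (Y i) 2 P)
    (hindep : Set.Pairwise s fun i j ↦ Y i ⟂ᵢ[P] Y j)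
    (hvar : ∀ i ∈ s, variance (Y i) P = σ ^ 2) :
    variance (fun ω ↦ (∑ i ∈ s, Y i ω) / #s) P = σ ^ 2 / #s := by
  have hsum : (fun ω ↦ (∑ i ∈ s, Y i ω) / #s) = fun ω ↦ (#s : ℝ)⁻¹ * (∑ i ∈ s, Y i) ω := by
    ext ω; rw [Finset.sum_apply, div_eq_inv_mul]
  rw [hsum, variance_const_mul, IndepFun.variance_sum hL2 hindep, sum_congr rfl hvar, sum_const,
    nsmul_eq_mul]
  rcases eq_or_ne (#s : ℝ) 0 with h | h
  · simp [h]
  · field_simp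

lemma memLp_sum_div_card (hL2 : ∀ i ∈ s, MemLp (Y i) 2 P) :
    MemLp (fun ω ↦ (∑ i ∈ s, Y i ω) / #s) 2 P := by
  simpa only [Finset.sum_apply, div_eq_inv_mul] using
    (memLp_finsetSum' s hL2).const_mul (#s : ℝ)⁻¹

lemma measure_lt_abs_sum_div_card_sub_le [IsFiniteMeasure P] (hs : s.Nonempty)
    (hL2 : ∀ i ∈ s, MemLp (Y i) 2 P) (hindep : Set.Pairwise s fun i j ↦ Y i ⟂ᵢ[P] Y j)
    (hmean : ∀ i ∈ s, ∫ ω, Y i ω ∂P = m) (hvar : ∀ i ∈ s, variance (Y i) P = σ ^ 2)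
    {ε : ℝ} (hε : 0 < ε) :
    P {ω | ε < |(∑ i ∈ s, Y i ω) / #s - m|} ≤ ENNReal.ofReal (σ ^ 2 / (#s * ε ^ 2)) := by
  have hcheb := meas_ge_le_variance_div_sq (memLp_sum_div_card hL2) hε
  rw [integral_sum_div_card hs (fun i hi ↦ (hL2 i hi).integrable one_le_two) hmean,
    variance_sum_div_card hL2 hindep hvar, div_div] at hcheb
  exact (measure_mono fun ω (hω : ε < _) ↦ hω.le).trans hcheb

end SampleMean

namespace ProbabilityTheory.iIndepFun

variable {Ω β : Type*} [MeasurableSpace Ω] {P : Measure Ω} [MeasurableSpace β]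

lemma curry {ι κ : Type*} {X : ι × κ → Ω → β} (hX : ∀ p, Measurable (X p))
    (h : iIndepFun X P) :
    iIndepFun (fun i ω j ↦ X (i, j) ω) P := by
  have := h.isProbabilityMeasure
  have _ p := Measure.isProbabilityMeasure_map (μ := P) (hX p).aemeasurable
  have hrow i : P.map (fun ω j ↦ X (i, j) ω) = Measure.infinitePi fun j ↦ P.map (X (i, j)) :=
    (h.precomp (Prod.mk_right_injective i)).map_fun_eq_infinitePi_map fun j ↦ hX _
  have hcurry : (fun ω i j ↦ X (i, j) ω) = MeasurableEquiv.curry ι κ β ∘ fun ω p ↦ X p ω := rfl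
  rw [iIndepFun_iff_map_fun_eq_infinitePi_map fun i ↦ measurable_pi_lambda _ fun j ↦ hX _,
    hcurry, ← Measure.map_map (by fun_prop) (measurable_pi_lambda _ hX),
    h.map_fun_eq_infinitePi_map hX]
  simp only [hrow]
  exact Measure.infinitePi_map_curry fun i j ↦ P.map (X (i, j))

lemma iIndepSet_preimage {ι : Type*} {f : ι → Ω → β} (hf : iIndepFun f P)
    (hmeas : ∀ i, Measurable (f i)) {T : Set β} (hT : MeasurableSet T) :
    iIndepSet (fun i ↦ f i ⁻¹' T) P :=
  (iIndepSet_iff_meas_biInter fun i ↦ hmeas i hT).2 fun _ ↦ hf.meas_biInter fun _ _ ↦ ⟨T, hT, rfl⟩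

end ProbabilityTheory.iIndepFun

section BatchMean

variable {Ω : Type*} {X : ℕ → Ω → ℝ}

noncomputable def batchMean (X : ℕ → Ω → ℝ) (B k : ℕ) (ω : Ω) : ℝ :=
  (∑ j ∈ range B, X (k * B + j) ω) / B

lemma batchMean_eq_sum_fin (B k : ℕ) (ω : Ω) :
    batchMean X B k ω = (∑ j : Fin B, X (k * B + j) ω) / B := by
  rw [batchMean, Fin.sum_univ_eq_sum_range (fun j ↦ X (k * B + j) ω)]

variable [MeasurableSpace Ω] {P : Measure Ω}

lemma measurable_batchMean (hX : ∀ i, Measurable (X i)) (B k : ℕ) :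
    Measurable (batchMean X B k) := by
  unfold batchMean; fun_prop

lemma iIndepFun_batchMean (hX : ∀ i, Measurable (X i)) (h : iIndepFun X P) (B : ℕ) [NeZero B] :
    iIndepFun (batchMean X B) P := by
  -- `(Nat.divModEquiv B).symm (k, j) = k * B + j`
  have hbatches : iIndepFun (fun k ω (j : Fin B) ↦ X (k * B + j) ω) P :=
    (h.precomp (Nat.divModEquiv B).symm.injective).curry fun _ ↦ hX _
  rw [funext₂ (batchMean_eq_sum_fin (X := X) B)]
  exact hbatches.comp (fun _ v ↦ (∑ j, v j) / B) fun _ ↦ by fun_prop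

lemma measure_lt_abs_batchMean_sub_le [IsFiniteMeasure P] (h : iIndepFun X P)
    {m σ : ℝ} (hL2 : ∀ i, MemLp (X i) 2 P) (hmean : ∀ i, ∫ ω, X i ω ∂P = m)
    (hvar : ∀ i, variance (X i) P = σ ^ 2) {ε : ℝ} (hε : 0 < ε) {B : ℕ} (hB : 1 ≤ B) (k : ℕ) :
    P {ω | ε < |batchMean X B k ω - m|} ≤ ENNReal.ofReal (σ ^ 2 / (B * ε ^ 2)) := by
  have hpair : Set.Pairwise (range B : Set ℕ) fun i j ↦ X (k * B + i) ⟂ᵢ[P] X (k * B + j) :=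
    fun i _ j _ hij ↦ h.indepFun (by omega)
  simpa [batchMean] using measure_lt_abs_sum_div_card_sub_le (nonempty_range_iff.2 (by omega))
    (fun j _ ↦ hL2 _) hpair (fun j _ ↦ hmean _) (fun j _ ↦ hvar _) hε

end BatchMean

lemma Nat.cast_div_two_le_iff {K n : ℕ} : (K : ℝ) / 2 ≤ n ↔ (K + 1) / 2 ≤ n := by
  rw [div_le_iff₀ two_pos, ← Nat.cast_ofNat, ← Nat.cast_mul, Nat.cast_le]
  omega

lemma choose_mul_pow_le_exp {K c : ℕ} (hc : K ≤ 2 * c) {p : ℝ} (hp₀ : 0 ≤ p)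
    (hp : 4 * p ≤ Real.exp (-1)) :
    K.choose c * p ^ c ≤ Real.exp (-K / 2) := by
  have hchoose : (K.choose c : ℝ) ≤ 4 ^ c := by
    calc (K.choose c : ℝ) ≤ 2 ^ K := by exact_mod_cast Nat.choose_le_two_pow K c
      _ ≤ 2 ^ (2 * c) := pow_le_pow_right₀ one_le_two hc
      _ = 4 ^ c := by rw [pow_mul]; norm_num
  calc K.choose c * p ^ c ≤ 4 ^ c * p ^ c := by gcongr
    _ = (4 * p) ^ c := (mul_pow _ _ _).symm
    _ ≤ Real.exp (-1) ^ c := by gcongr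
    _ = Real.exp (-c) := by rw [← Real.exp_nat_mul]; ring_nf
    _ ≤ Real.exp (-K / 2) := by
        gcongr
        have : (K : ℝ) ≤ 2 * c := by exact_mod_cast hc
        linarith

lemma four_mul_inv_thirtyFour_le_exp_neg_one : 4 * (34 : ℝ)⁻¹ ≤ Real.exp (-1) := by
  rw [Real.exp_neg, ← div_eq_mul_inv, le_inv_comm₀ (by norm_num) (Real.exp_pos 1)]
  linarith [Real.exp_one_lt_d9]

section IndependentEvents

variable {Ω ι : Type*} [MeasurableSpace Ω] {P : Measure Ω} {A : ι → Ω → Prop}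
  [∀ i ω, Decidable (A i ω)]

lemma measure_le_card_filter_le_choose_mul_pow (hA : iIndepSet (fun i ↦ {ω | A i ω}) P)
    (s : Finset ι) (c : ℕ) {p : ENNReal} (hp : ∀ i ∈ s, P {ω | A i ω} ≤ p) :
    P {ω | c ≤ #{i ∈ s | A i ω}} ≤ (#s).choose c * p ^ c := by
  have hcover : {ω | c ≤ #{i ∈ s | A i ω}} ⊆ ⋃ t ∈ s.powersetCard c, ⋂ i ∈ t, {ω | A i ω} := by
    intro ω hω
    obtain ⟨t, hts, htc⟩ := exists_subset_card_eq hω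
    refine Set.mem_biUnion (mem_powersetCard.2 ⟨hts.trans (filter_subset _ _), htc⟩) ?_
    exact Set.mem_iInter₂.2 fun i hi ↦ (mem_filter.1 (hts hi)).2
  calc P {ω | c ≤ #{i ∈ s | A i ω}}
      ≤ ∑ t ∈ s.powersetCard c, P (⋂ i ∈ t, {ω | A i ω}) :=
        (measure_mono hcover).trans (measure_biUnion_finset_le _ _)
    _ ≤ ∑ t ∈ s.powersetCard c, p ^ c := by
        refine sum_le_sum fun t ht ↦ ?_
        obtain ⟨hts, htc⟩ := mem_powersetCard.1 ht
        rw [hA.meas_biInter, ← htc, ← prod_const]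
        exact prod_le_prod' fun i hi ↦ hp i (hts hi)
    _ = (#s).choose c * p ^ c := by rw [sum_const, card_powersetCard, nsmul_eq_mul]

lemma measure_half_le_card_filter_le_exp (hA : iIndepSet (fun i ↦ {ω | A i ω}) P)
    (s : Finset ι) {p : ℝ} (hp₀ : 0 ≤ p) (hp : 4 * p ≤ Real.exp (-1))
    (hAp : ∀ i ∈ s, P {ω | A i ω} ≤ ENNReal.ofReal p) :
    P {ω | (#s : ℝ) / 2 ≤ #{i ∈ s | A i ω}} ≤ ENNReal.ofReal (Real.exp (-#s / 2)) := by
  simp only [Nat.cast_div_two_le_iff]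
  refine (measure_le_card_filter_le_choose_mul_pow hA s _ hAp).trans ?_
  rw [← ENNReal.ofReal_pow hp₀, ← ENNReal.ofReal_natCast, ← ENNReal.ofReal_mul (by positivity)]
  exact ENNReal.ofReal_le_ofReal (choose_mul_pow_le_exp (by omega) hp₀ hp)

end IndependentEvents

lemma half_le_card_filter_lt_abs_sub_of_median {ι : Type*} {s : Finset ι} {f : ι → ℝ}
    {med m ε : ℝ} (hle : (#s + 1) / 2 ≤ #{i ∈ s | f i ≤ med})
    (hge : (#s + 1) / 2 ≤ #{i ∈ s | med ≤ f i}) (hfar : ε < |med - m|) :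
    (#s : ℝ) / 2 ≤ #{i ∈ s | ε < |f i - m|} := by
  rw [Nat.cast_div_two_le_iff]
  rcases lt_abs.1 hfar with h | h
  · refine hge.trans (card_le_card (monotone_filter_right _ fun i _ hi ↦ ?_))
    exact lt_of_lt_of_le (by linarith) (le_abs_self _)
  · refine hle.trans (card_le_card (monotone_filter_right _ fun i _ hi ↦ ?_))
    exact lt_of_lt_of_le (by linarith) (neg_le_abs _)

theorem median_of_means_general {Ω : Type*} [MeasurableSpace Ω]
    (P : Measure Ω) [IsProbabilityMeasure P]
    (X : ℕ → Ω → ℝ) (hmeas : ∀ i, Measurable (X i))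
    (hindep : iIndepFun X P)
    (m σ : ℝ)
    (hL2 : ∀ i, MemLp (X i) 2 P)
    (hmean : ∀ i, ∫ ω, X i ω ∂P = m)
    (hvar : ∀ i, variance (X i) P = σ ^ 2)
    (ε : ℝ) (hε : 0 < ε) (K B : ℕ) (hB1 : 1 ≤ B)
    (hB : 34 * σ ^ 2 / ε ^ 2 ≤ (B : ℝ))
    (μhat : ℕ → Ω → ℝ)
    (hμhat : ∀ k ω, μhat k ω = (∑ j ∈ Finset.range B, X (k * B + j) ω) / B) :
    P {ω | (K : ℝ) / 2 ≤
        (((Finset.range K).filter fun k => ε < |μhat k ω - m|).card : ℝ)}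
      ≤ ENNReal.ofReal (2 * Real.exp (-(K : ℝ) / 2)) ∧
    ∀ med : Ω → ℝ,
      (∀ ω, (K + 1) / 2 ≤ ((Finset.range K).filter fun k => μhat k ω ≤ med ω).card ∧
            (K + 1) / 2 ≤ ((Finset.range K).filter fun k => med ω ≤ μhat k ω).card) →
      P {ω | ε < |med ω - m|} ≤ ENNReal.ofReal (2 * Real.exp (-(K : ℝ) / 2)) := by
  obtain rfl : μhat = batchMean X B := funext₂ hμhat
  have : NeZero B := ⟨by omega⟩
  have hcheb k : P {ω | ε < |batchMean X B k ω - m|} ≤ ENNReal.ofReal 34⁻¹ := by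
    refine (measure_lt_abs_batchMean_sub_le hindep hL2 hmean hvar hε hB1 k).trans
      (ENNReal.ofReal_le_ofReal ?_)
    have hBpos : (0 : ℝ) < B := by exact_mod_cast hB1
    rw [div_le_iff₀ (by positivity)] at hB ⊢
    nlinarith
  have hfar : MeasurableSet {x : ℝ | ε < |x - m|} :=
    measurableSet_lt measurable_const (by fun_prop)
  have hindepFar := (iIndepFun_batchMean hmeas hindep B).iIndepSet_preimage
    (measurable_batchMean hmeas B) hfar
  have hmain := measure_half_le_card_filter_le_exp
    (A := fun k ω ↦ ε < |batchMean X B k ω - m|) hindepFar (range K) (by norm_num)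
    four_mul_inv_thirtyFour_le_exp_neg_one fun k _ ↦ hcheb k
  simp only [card_range] at hmain
  replace hmain := hmain.trans
    (ENNReal.ofReal_le_ofReal (le_mul_of_one_le_left (Real.exp_pos _).le one_le_two))
  refine ⟨hmain, fun med hmed ↦ (measure_mono fun ω (hω : ε < |med ω - m|) ↦ ?_).trans hmain⟩
  simpa using half_le_card_filter_lt_abs_sub_of_median (s := range K)
    (by simpa using (hmed ω).1) (by simpa using (hmed ω).2) hω

/-- median-of-means estimation, Theorem 3 of the paper:
given i.i.d. real random variables `X 0, X 1, …` with mean `m` and variance `σ²`,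
`K ≥ 1` batches of size `B ≥ 34 σ²/ε²` each, and batch means
`μ̂ k = (Σ_{j<B} X (k·B+j)) / B`, the probability that at least `K/2` of the batch means
deviate from `m` by more than `ε` is at most `2 e^{−K/2}`; in particular any median of the
batch means deviates from `m` by more than `ε` with probability at most `2 e^{−K/2}`. -/
theorem median_of_means {Ω : Type*} [MeasurableSpace Ω]
    (P : Measure Ω) [IsProbabilityMeasure P]
    (X : ℕ → Ω → ℝ) (hmeas : ∀ i, Measurable (X i))
    (hindep : iIndepFun X P)
    (hident : ∀ i, IdentDistrib (X i) (X 0) P P)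
    (m σ : ℝ)
    (hL2 : ∀ i, MemLp (X i) 2 P)
    (hmean : ∀ i, ∫ ω, X i ω ∂P = m)
    (hvar : ∀ i, variance (X i) P = σ ^ 2)
    (ε : ℝ) (hε : 0 < ε) (K B : ℕ) (hK : 1 ≤ K) (hB1 : 1 ≤ B)
    (hB : 34 * σ ^ 2 / ε ^ 2 ≤ (B : ℝ))
    (μhat : ℕ → Ω → ℝ)
    (hμhat : ∀ k ω, μhat k ω = (∑ j ∈ Finset.range B, X (k * B + j) ω) / B) :
    P {ω | (K : ℝ) / 2 ≤
        (((Finset.range K).filter fun k => ε < |μhat k ω - m|).card : ℝ)}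
      ≤ ENNReal.ofReal (2 * Real.exp (-(K : ℝ) / 2)) ∧
    ∀ med : Ω → ℝ,
      (∀ ω, (K + 1) / 2 ≤ ((Finset.range K).filter fun k => μhat k ω ≤ med ω).card ∧
            (K + 1) / 2 ≤ ((Finset.range K).filter fun k => med ω ≤ μhat k ω).card) →
      P {ω | ε < |med ω - m|} ≤ ENNReal.ofReal (2 * Real.exp (-(K : ℝ) / 2)) :=
  median_of_means_general P X hmeas hindep m σ hL2 hmean hvar ε hε K B hB1 hB μhat hμhat
end

section
/- Let D ≥ 1, let P be a rank-r orthogonal projection on ℂ^D with 1 ≤ r ≤ D, let α ∈ [0,1], and set ρ = (1−α)·I/D + α·P/r. Let μ be the rotation-invariant probability measure on the unit sphere of ℂ^D and define p(u) = D·⟨u, ρ u⟩. Then the variance satisfies ∫ p(u)² dμ(u) − (∫ p(u) dμ(u))² ≤ α²/r. -/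
open MeasureTheory Matrix

/-!
Diagonalise `P` in an orthonormal eigenbasis. Since `μ` is invariant under this change of basis,
`⟨u, P u⟩` has the law of `∑ₖ λₖ |uₖ|²` with `λₖ ∈ {0, 1}` and `∑ₖ λₖ = r`, so its variance only
involves the moments `E|uᵢ|² = 1/D` and `E|uᵢ|²|uⱼ|² = (1 + δᵢⱼ)/(D(D+1))`.

These moments come from invariance alone. A Householder reflection maps a vector to any other
vector of the same norm having a real inner product with it, so `E f(⟨v, u⟩)` is the same for
`v = √2 eᵢ` and `v = eᵢ + c eⱼ` with `|c| = 1`; summing `|uᵢ + c uⱼ|⁴` over `c ∈ {±1, ±i}` gives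
`E|uᵢ|⁴ = 2 E|uᵢ|²|uⱼ|²`, and `∑ᵢ |uᵢ|² = 1` fixes the constants. Hence `⟨u, P u⟩` has variance
`r(D − r)/(D²(D + 1))`, and `p` has variance `α²(D − r)/(r(D + 1)) ≤ α²/r`.
-/

open ProbabilityTheory InnerProductSpace ComplexConjugate

section Reflection

variable {𝕜 E : Type*} [RCLike 𝕜] [NormedAddCommGroup E] [InnerProductSpace 𝕜 E]

theorem Submodule.reflection_sub_of_inner_comm {v w : E} (hnorm : ‖v‖ = ‖w‖)
    (hinner : ⟪v, w⟫_𝕜 = ⟪w, v⟫_𝕜) : reflection (𝕜 ∙ (v - w))ᗮ v = w := by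
  set R : E ≃ₗᵢ[𝕜] E := reflection (𝕜 ∙ (v - w))ᗮ
  suffices R v + R v = w + w by
    apply smul_right_injective E (by simp : (2 : 𝕜) ≠ 0)
    simpa [two_smul] using this
  have h₁ : R (v - w) = -(v - w) := reflection_orthogonalComplement_singleton_eq_neg (v - w)
  have h₂ : R (v + w) = v + w := by
    apply reflection_mem_subspace_eq_self
    rw [Submodule.mem_orthogonal_singleton_iff_inner_right, inner_sub_left, inner_add_right,
      inner_add_right, hinner, inner_self_eq_norm_sq_to_K, inner_self_eq_norm_sq_to_K, hnorm]
    ring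
  calc R v + R v = R (v + w) + R (v - w) := by simp only [map_add, map_sub]; abel
    _ = w + w := by rw [h₁, h₂]; abel

end Reflection

section IsometryInvariant

variable {𝕜 E : Type*} [RCLike 𝕜] [NormedAddCommGroup E] [InnerProductSpace 𝕜 E]
  [MeasurableSpace E] [BorelSpace E] {μ : Measure E}

variable (𝕜) in
def IsLinearIsometryInvariant (μ : Measure E) : Prop :=
  ∀ U : E ≃ₗᵢ[𝕜] E, μ.map U = μ

theorem integral_comp_linearIsometryEquiv_s10 (hinv : IsLinearIsometryInvariant 𝕜 μ)
    (U : E ≃ₗᵢ[𝕜] E) {G : Type*} [NormedAddCommGroup G] [NormedSpace ℝ G] (f : E → G) :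
    ∫ u, f (U u) ∂μ = ∫ u, f u ∂μ :=
  MeasurePreserving.integral_comp' (f := U.toHomeomorph.toMeasurableEquiv)
    ⟨U.continuous.measurable, hinv U⟩ f

theorem variance_comp_linearIsometryEquiv (hinv : IsLinearIsometryInvariant 𝕜 μ)
    (U : E ≃ₗᵢ[𝕜] E) (X : E → ℝ) : Var[X ∘ U; μ] = Var[X; μ] := by
  have h := variance_map_equiv (μ := μ) X U.toHomeomorph.toMeasurableEquiv
  exact h.symm.trans (congrArg _ (hinv U))

theorem integral_comp_inner_eq (hinv : IsLinearIsometryInvariant 𝕜 μ)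
    {v w : E} (hnorm : ‖v‖ = ‖w‖) (hinner : ⟪v, w⟫_𝕜 = ⟪w, v⟫_𝕜)
    {G : Type*} [NormedAddCommGroup G] [NormedSpace ℝ G] (f : 𝕜 → G) :
    ∫ u, f ⟪w, u⟫_𝕜 ∂μ = ∫ u, f ⟪v, u⟫_𝕜 ∂μ := by
  set R : E ≃ₗᵢ[𝕜] E := (𝕜 ∙ (v - w))ᗮ.reflection
  have hR : ∀ u, ⟪w, u⟫_𝕜 = ⟪v, R u⟫_𝕜 := fun u => by
    rw [← Submodule.reflection_sub_of_inner_comm hnorm hinner, ← R.inner_map_map,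
      Submodule.reflection_reflection]
  simp only [hR]
  exact integral_comp_linearIsometryEquiv_s10 hinv R fun u => f ⟪v, u⟫_𝕜

theorem memLp_of_continuous_of_ae_norm_eq_one [ProperSpace E] [IsFiniteMeasure μ]
    (hsupp : ∀ᵐ u ∂μ, ‖u‖ = 1) {f : E → ℝ} (hf : Continuous f) (p : ENNReal) : MemLp f p μ := by
  obtain ⟨C, hC⟩ := (isCompact_sphere (0 : E) 1).exists_bound_of_continuousOn hf.continuousOn
  refine MemLp.of_bound hf.aestronglyMeasurable C ?_
  filter_upwards [hsupp] with u hu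
  exact hC u (by simpa using hu)

theorem integrable_of_continuous_of_ae_norm_eq_one [ProperSpace E] [IsFiniteMeasure μ]
    (hsupp : ∀ᵐ u ∂μ, ‖u‖ = 1) {f : E → ℝ} (hf : Continuous f) : Integrable f μ :=
  memLp_one_iff_integrable.1 (memLp_of_continuous_of_ae_norm_eq_one hsupp hf 1)

end IsometryInvariant

theorem Complex.sum_norm_add_mul_pow_four (z w : ℂ) :
    ‖z + w‖ ^ 4 + ‖z - w‖ ^ 4 + ‖z + I * w‖ ^ 4 + ‖z - I * w‖ ^ 4
      = 4 * ‖z‖ ^ 4 + 4 * ‖w‖ ^ 4 + 16 * (‖z‖ ^ 2 * ‖w‖ ^ 2) := by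
  simp only [show ∀ x : ℂ, ‖x‖ ^ 4 = (‖x‖ ^ 2) ^ 2 from fun x => by ring, Complex.sq_norm,
    Complex.normSq_apply, add_re, add_im, sub_re, sub_im, mul_re, mul_im, I_re, I_im, zero_mul,
    one_mul, zero_sub, zero_add, sub_neg_eq_add]
  ring

section SphereMoments

variable {D : ℕ} {μ : Measure (EuclideanSpace ℂ (Fin D))}

theorem integral_comp_apply_eq (hinv : IsLinearIsometryInvariant ℂ μ)
    (f : ℂ → ℝ) (i j : Fin D) : ∫ u, f (u i) ∂μ = ∫ u, f (u j) ∂μ := by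
  have h := integral_comp_inner_eq hinv (v := EuclideanSpace.single j (1 : ℂ))
    (w := EuclideanSpace.single i 1) (by simp)
    (by simp [EuclideanSpace.inner_single_left, eq_comm]) f
  simpa [EuclideanSpace.inner_single_left] using h

theorem integral_norm_add_mul_apply_pow_four (hinv : IsLinearIsometryInvariant ℂ μ)
    {i j : Fin D} (hij : i ≠ j) {c : ℂ} (hc : ‖c‖ = 1) :
    ∫ u, ‖u i + c * u j‖ ^ 4 ∂μ = 4 * ∫ u, ‖u i‖ ^ 4 ∂μ := by
  have horth : ⟪EuclideanSpace.single i (1 : ℂ), EuclideanSpace.single j (conj c)⟫_ℂ = 0 := by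
    simp [EuclideanSpace.inner_single_left, hij.symm]
  have hnorm : ‖EuclideanSpace.single i ((Real.sqrt 2 : ℝ) : ℂ)‖
      = ‖EuclideanSpace.single i (1 : ℂ) + EuclideanSpace.single j (conj c)‖ := by
    rw [← sq_eq_sq₀ (norm_nonneg _) (norm_nonneg _), @norm_add_sq ℂ, horth]
    norm_num [hc]
  have h := integral_comp_inner_eq hinv hnorm
    (by simp [inner_add_left, EuclideanSpace.inner_single_left, hij]) fun z : ℂ => ‖z‖ ^ 4
  simp only [inner_add_left, EuclideanSpace.inner_single_left, map_one, one_mul,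
    RCLike.conj_conj, Complex.conj_ofReal] at h
  rw [h, ← integral_const_mul]
  congr 1 with u
  rw [norm_mul, mul_pow, Complex.norm_real, Real.norm_of_nonneg (Real.sqrt_nonneg 2),
    show Real.sqrt 2 ^ 4 = (Real.sqrt 2 ^ 2) ^ 2 by ring, Real.sq_sqrt zero_le_two]
  norm_num

variable [IsProbabilityMeasure μ]

theorem integral_norm_apply_sq (hsupp : ∀ᵐ u ∂μ, ‖u‖ = 1)
    (hinv : IsLinearIsometryInvariant ℂ μ) (i : Fin D) :
    ∫ u, ‖u i‖ ^ 2 ∂μ = (D : ℝ)⁻¹ := by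
  have hsum : ∑ k, ∫ u, ‖u k‖ ^ 2 ∂μ = 1 := by
    rw [← integral_finsetSum _ fun k _ =>
      integrable_of_continuous_of_ae_norm_eq_one hsupp (by fun_prop)]
    have h : ∀ᵐ u ∂μ, ∑ k, ‖u k‖ ^ 2 = 1 := by
      filter_upwards [hsupp] with u hu
      rw [← EuclideanSpace.norm_sq_eq, hu, one_pow]
    simp [integral_congr_ae h]
  simp only [integral_comp_apply_eq hinv (fun z => ‖z‖ ^ 2) _ i, Finset.sum_const,
    Finset.card_univ, Fintype.card_fin, nsmul_eq_mul] at hsum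
  exact eq_inv_of_mul_eq_one_right hsum

theorem integral_norm_apply_sq_mul_of_ne (hsupp : ∀ᵐ u ∂μ, ‖u‖ = 1)
    (hinv : IsLinearIsometryInvariant ℂ μ) {i j : Fin D} (hij : i ≠ j) :
    ∫ u, ‖u i‖ ^ 2 * ‖u j‖ ^ 2 ∂μ = (∫ u, ‖u i‖ ^ 4 ∂μ) / 2 := by
  have hint : ∀ f : EuclideanSpace ℂ (Fin D) → ℝ, Continuous f → Integrable f μ :=
    fun f hf => integrable_of_continuous_of_ae_norm_eq_one hsupp hf
  have hrot := fun c hc => integral_norm_add_mul_apply_pow_four hinv hij (c := c) hc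
  have h₁ := hrot 1 (by simp)
  have h₂ := hrot (-1) (by simp)
  have h₃ := hrot Complex.I (by simp)
  have h₄ := hrot (-Complex.I) (by simp)
  simp only [one_mul, neg_mul, ← sub_eq_add_neg] at h₁ h₂ h₃ h₄
  have hj : ∫ u, ‖u j‖ ^ 4 ∂μ = ∫ u, ‖u i‖ ^ 4 ∂μ :=
    integral_comp_apply_eq hinv (fun z => ‖z‖ ^ 4) j i
  have hsum := congrArg (fun f => ∫ u, f u ∂μ)
    (funext fun u : EuclideanSpace ℂ (Fin D) => Complex.sum_norm_add_mul_pow_four (u i) (u j))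
  simp only at hsum
  rw [integral_add (hint _ (by fun_prop)) (hint _ (by fun_prop)),
    integral_add (hint _ (by fun_prop)) (hint _ (by fun_prop)),
    integral_add (hint _ (by fun_prop)) (hint _ (by fun_prop)),
    integral_add (hint _ (by fun_prop)) (hint _ (by fun_prop)),
    integral_add (hint _ (by fun_prop)) (hint _ (by fun_prop)),
    integral_const_mul, integral_const_mul, integral_const_mul, h₁, h₂, h₃, h₄, hj] at hsum
  linarith

theorem integral_norm_apply_sq_mul_norm_apply_sq (hsupp : ∀ᵐ u ∂μ, ‖u‖ = 1)
    (hinv : IsLinearIsometryInvariant ℂ μ) (i j : Fin D) :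
    ∫ u, ‖u i‖ ^ 2 * ‖u j‖ ^ 2 ∂μ = (if i = j then 2 else 1) / (D * (D + 1)) := by
  set s := ∫ u, ‖u i‖ ^ 4 ∂μ
  have hQ : ∀ k l : Fin D, ∫ u, ‖u k‖ ^ 2 * ‖u l‖ ^ 2 ∂μ = if k = l then s else s / 2 := by
    intro k l
    have hk : ∫ u, ‖u k‖ ^ 4 ∂μ = s := integral_comp_apply_eq hinv (fun z => ‖z‖ ^ 4) k i
    split_ifs with hkl
    · simp only [hkl, ← pow_add, ← hk]
    · rw [integral_norm_apply_sq_mul_of_ne hsupp hinv hkl, hk]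
  have hsum : ∑ k, ∑ l, ∫ u, ‖u k‖ ^ 2 * ‖u l‖ ^ 2 ∂μ = 1 := by
    have hint : ∀ k l : Fin D, Integrable (fun u => ‖u k‖ ^ 2 * ‖u l‖ ^ 2) μ :=
      fun k l => integrable_of_continuous_of_ae_norm_eq_one hsupp (by fun_prop)
    simp_rw [← integral_finsetSum _ fun l _ => hint _ l]
    rw [← integral_finsetSum _ fun k _ => integrable_finsetSum _ fun l _ => hint k l]
    have h : ∀ᵐ u ∂μ, ∑ k, ∑ l, ‖u k‖ ^ 2 * ‖u l‖ ^ 2 = 1 := by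
      filter_upwards [hsupp] with u hu
      rw [← Finset.sum_mul_sum, ← EuclideanSpace.norm_sq_eq, hu]
      norm_num
    simp [integral_congr_ae h]
  have hs : (D * (D + 1) : ℝ) * s = 2 := by
    have hrow : ∀ k : Fin D, ∑ l, (if k = l then s else s / 2) = s / 2 + D * (s / 2) := by
      intro k
      rw [Finset.sum_congr rfl fun l _ => show (if k = l then s else s / 2)
        = (if k = l then s / 2 else 0) + s / 2 by split_ifs <;> ring]
      simp [Finset.sum_add_distrib]
    simp only [hQ, hrow, Finset.sum_const, Finset.card_univ, Fintype.card_fin, nsmul_eq_mul] at hsum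
    linear_combination 2 * hsum
  have hD : (D * (D + 1) : ℝ) ≠ 0 := by have := i.pos; positivity
  rw [hQ]
  split_ifs
  · rw [eq_div_iff hD, mul_comm, hs]
  · rw [eq_div_iff hD]; linear_combination hs / 2

end SphereMoments

section Expval

variable {D : ℕ}

theorem expval_add (A B : Matrix (Fin D) (Fin D) ℂ) (u : EuclideanSpace ℂ (Fin D)) :
    expval (A + B) u = expval A u + expval B u := by
  simp [expval]

theorem expval_smul (c : ℝ) (A : Matrix (Fin D) (Fin D) ℂ) (u : EuclideanSpace ℂ (Fin D)) :
    expval (c • A) u = c * expval A u := by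
  simp [expval, ← Complex.coe_smul]

theorem expval_one (u : EuclideanSpace ℂ (Fin D)) : expval 1 u = (‖u‖ ^ 2 : ℝ) := by
  simp [expval, inner_self_eq_norm_sq_to_K]

@[fun_prop]
theorem continuous_expval (A : Matrix (Fin D) (Fin D) ℂ) : Continuous (expval A) :=
  continuous_id.inner (toEuclideanLin A).continuous_of_finiteDimensional

end Expval

section QuadraticForm

variable {D : ℕ}

noncomputable def weightedNormSq (w : Fin D → ℝ) (u : EuclideanSpace ℂ (Fin D)) : ℝ :=
  ∑ k, w k * ‖u k‖ ^ 2

theorem continuous_weightedNormSq (w : Fin D → ℝ) : Continuous (weightedNormSq w) := by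
  unfold weightedNormSq
  fun_prop

theorem Matrix.IsHermitian.expval_eq_weightedNormSq {A : Matrix (Fin D) (Fin D) ℂ}
    (hA : A.IsHermitian) (u : EuclideanSpace ℂ (Fin D)) :
    expval A u = weightedNormSq hA.eigenvalues (hA.eigenvectorBasis.repr u) := by
  set b := hA.eigenvectorBasis
  have hb : ∀ k, toEuclideanLin A (b k) = (hA.eigenvalues k : ℂ) • b k := fun k => by
    ext1
    simp [b, hA.mulVec_eigenvectorBasis]
  have hrepr : ∀ k, b.repr (toEuclideanLin A u) k = hA.eigenvalues k * b.repr u k := fun k => by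
    rw [b.repr_apply_apply, b.repr_apply_apply, ← isSymmetric_toEuclideanLin_iff.2 hA, hb,
      inner_smul_left, Complex.conj_ofReal]
  rw [expval, ← b.repr.inner_map_map, PiLp.inner_apply, weightedNormSq, Complex.ofReal_sum]
  refine Finset.sum_congr rfl fun k _ => ?_
  rw [hrepr, RCLike.inner_apply, mul_assoc, RCLike.mul_conj]
  push_cast
  rfl

variable {μ : Measure (EuclideanSpace ℂ (Fin D))} [IsProbabilityMeasure μ]

theorem integral_weightedNormSq (hsupp : ∀ᵐ u ∂μ, ‖u‖ = 1)
    (hinv : IsLinearIsometryInvariant ℂ μ) (w : Fin D → ℝ) :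
    ∫ u, weightedNormSq w u ∂μ = (∑ k, w k) / D := by
  unfold weightedNormSq
  rw [integral_finsetSum _ fun k _ =>
    (integrable_of_continuous_of_ae_norm_eq_one hsupp (by fun_prop)).const_mul (w k)]
  simp only [integral_const_mul, integral_norm_apply_sq hsupp hinv, ← Finset.sum_mul,
    div_eq_mul_inv]

theorem integral_weightedNormSq_sq (hsupp : ∀ᵐ u ∂μ, ‖u‖ = 1)
    (hinv : IsLinearIsometryInvariant ℂ μ) (w : Fin D → ℝ) :
    ∫ u, weightedNormSq w u ^ 2 ∂μ = ((∑ k, w k) ^ 2 + ∑ k, w k ^ 2) / (D * (D + 1)) := by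
  have hint : ∀ k l : Fin D, Integrable (fun u => w k * w l * (‖u k‖ ^ 2 * ‖u l‖ ^ 2)) μ :=
    fun k l => (integrable_of_continuous_of_ae_norm_eq_one hsupp (by fun_prop)).const_mul _
  have hexpand : ∀ u, weightedNormSq w u ^ 2 = ∑ k, ∑ l, w k * w l * (‖u k‖ ^ 2 * ‖u l‖ ^ 2) :=
    fun u => by
      rw [weightedNormSq, sq, Finset.sum_mul_sum]
      exact Finset.sum_congr rfl fun k _ => Finset.sum_congr rfl fun l _ => by ring
  simp only [hexpand]
  rw [integral_finsetSum _ fun k _ => integrable_finsetSum _ fun l _ => hint k l]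
  simp only [integral_finsetSum _ fun l _ => hint _ l, integral_const_mul,
    integral_norm_apply_sq_mul_norm_apply_sq hsupp hinv]
  have hrow : ∀ k, ∑ l, w k * w l * ((if k = l then 2 else 1) / (D * (D + 1)))
      = (w k * ∑ l, w l + w k ^ 2) / (D * (D + 1)) := fun k => by
    rw [Finset.sum_congr rfl fun l _ => show w k * w l * ((if k = l then 2 else 1) / (D * (D + 1)))
        = (w k * w l + if k = l then w k * w l else 0) / (D * (D + 1)) by split_ifs <;> ring,
      ← Finset.sum_div, Finset.sum_add_distrib, Finset.sum_ite_eq, ← Finset.mul_sum]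
    simp [sq]
  simp only [hrow, ← Finset.sum_div, Finset.sum_add_distrib, ← Finset.sum_mul, sq]

theorem variance_weightedNormSq (hsupp : ∀ᵐ u ∂μ, ‖u‖ = 1)
    (hinv : IsLinearIsometryInvariant ℂ μ) (w : Fin D → ℝ) :
    Var[weightedNormSq w; μ] = (D * ∑ k, w k ^ 2 - (∑ k, w k) ^ 2) / (D ^ 2 * (D + 1)) := by
  rw [variance_eq_sub (memLp_of_continuous_of_ae_norm_eq_one hsupp (continuous_weightedNormSq w) 2)]
  simp only [Pi.pow_apply]
  rw [integral_weightedNormSq_sq hsupp hinv, integral_weightedNormSq hsupp hinv]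
  rcases eq_or_ne D 0 with rfl | hD
  · simp
  · field_simp
    ring

end QuadraticForm

section Projection

variable {D : ℕ} {A : Matrix (Fin D) (Fin D) ℂ}

theorem Matrix.IsHermitian.eigenvalues_eq_zero_or_one (hA : A.IsHermitian)
    (hP : IsIdempotentElem A) (k : Fin D) : hA.eigenvalues k = 0 ∨ hA.eigenvalues k = 1 :=
  hP.spectrum_subset ℝ (hA.eigenvalues_mem_spectrum_real k)

theorem Matrix.IsHermitian.sum_eigenvalues_eq_rank (hA : A.IsHermitian)
    (hP : IsIdempotentElem A) : ∑ k, hA.eigenvalues k = A.rank := by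
  have h : ∀ k, hA.eigenvalues k = if hA.eigenvalues k ≠ 0 then 1 else 0 := fun k => by
    rcases hA.eigenvalues_eq_zero_or_one hP k with h | h <;> simp [h]
  rw [Finset.sum_congr rfl fun k _ => h k, Finset.sum_boole, hA.rank_eq_card_non_zero_eigs,
    Fintype.card_subtype]

theorem Matrix.IsHermitian.sum_eigenvalues_sq_eq_rank (hA : A.IsHermitian)
    (hP : IsIdempotentElem A) : ∑ k, hA.eigenvalues k ^ 2 = A.rank := by
  rw [← hA.sum_eigenvalues_eq_rank hP]
  refine Finset.sum_congr rfl fun k _ => ?_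
  rcases hA.eigenvalues_eq_zero_or_one hP k with h | h <;> simp [h]

variable {μ : Measure (EuclideanSpace ℂ (Fin D))} [IsProbabilityMeasure μ]

theorem variance_re_expval (hsupp : ∀ᵐ u ∂μ, ‖u‖ = 1)
    (hinv : IsLinearIsometryInvariant ℂ μ) (hA : A.IsHermitian) :
    Var[fun u => (expval A u).re; μ]
      = (D * ∑ k, hA.eigenvalues k ^ 2 - (∑ k, hA.eigenvalues k) ^ 2) / (D ^ 2 * (D + 1)) := by
  have h : (fun u => (expval A u).re) = weightedNormSq hA.eigenvalues ∘ hA.eigenvectorBasis.repr :=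
    funext fun u => by simp [hA.expval_eq_weightedNormSq]
  rw [h, variance_comp_linearIsometryEquiv hinv, variance_weightedNormSq hsupp hinv]

theorem variance_re_expval_of_isIdempotentElem (hsupp : ∀ᵐ u ∂μ, ‖u‖ = 1)
    (hinv : IsLinearIsometryInvariant ℂ μ) (hA : A.IsHermitian)
    (hP : IsIdempotentElem A) :
    Var[fun u => (expval A u).re; μ] = A.rank * (D - A.rank) / (D ^ 2 * (D + 1)) := by
  rw [variance_re_expval hsupp hinv hA, hA.sum_eigenvalues_sq_eq_rank hP,
    hA.sum_eigenvalues_eq_rank hP]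
  ring

end Projection


theorem sq_mul_div_mul_sub_div_le (D r α : ℝ) (hD : 0 ≤ D) (hr : 0 ≤ r) :
    (D * (α / r)) ^ 2 * (r * (D - r) / (D ^ 2 * (D + 1))) ≤ α ^ 2 / r := by
  rcases hD.eq_or_lt with rfl | hD
  · simp only [zero_mul, ne_eq, OfNat.ofNat_ne_zero, not_false_eq_true, zero_pow]; positivity
  rcases hr.eq_or_lt with rfl | hr
  · simp
  calc (D * (α / r)) ^ 2 * (r * (D - r) / (D ^ 2 * (D + 1))) = α ^ 2 / r * ((D - r) / (D + 1)) := by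
        field_simp
    _ ≤ α ^ 2 / r * 1 := by gcongr; rw [div_le_one (by positivity)]; linarith
    _ = α ^ 2 / r := mul_one _

theorem born_density_variance_general (D r : ℕ) (α : ℝ)
    (P : Matrix (Fin D) (Fin D) ℂ) (hherm : P.IsHermitian) (hproj : P * P = P)
    (hrank : P.rank = r)
    (μ : Measure (EuclideanSpace ℂ (Fin D))) [IsProbabilityMeasure μ]
    (hsupp : ∀ᵐ u ∂μ, ‖u‖ = 1)
    (hinv : ∀ U : EuclideanSpace ℂ (Fin D) ≃ₗᵢ[ℂ] EuclideanSpace ℂ (Fin D),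
      μ.map U = μ)
    (ρ : Matrix (Fin D) (Fin D) ℂ)
    (hρ : ρ = ((1 - α) / D : ℝ) • (1 : Matrix (Fin D) (Fin D) ℂ) + (α / r : ℝ) • P) :
    (∫ u, ((D : ℝ) * (expval ρ u).re) ^ 2 ∂μ)
        - (∫ u, (D : ℝ) * (expval ρ u).re ∂μ) ^ 2
      ≤ α ^ 2 / r := by
  have hρu : (fun u => (D : ℝ) * (expval ρ u).re)
      =ᵐ[μ] fun u => D * ((1 - α) / D) + D * (α / r) * (expval P u).re := by
    filter_upwards [hsupp] with u hu
    simp only [hρ, expval_add, expval_smul, expval_one, hu, Complex.add_re, Complex.re_ofReal_mul,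
      Complex.ofReal_re, one_pow, mul_one]
    ring
  have hvar := variance_eq_sub (memLp_of_continuous_of_ae_norm_eq_one hsupp
    (f := fun u => (D : ℝ) * (expval ρ u).re) (by fun_prop) 2)
  simp only [Pi.pow_apply] at hvar
  rw [← hvar, variance_congr hρu,
    variance_const_add (X := fun u => D * (α / r) * (expval P u).re) (by fun_prop),
    variance_const_mul, variance_re_expval_of_isIdempotentElem hsupp hinv hherm hproj, hrank]
  exact sq_mul_div_mul_sub_div_le D r α (Nat.cast_nonneg D) (Nat.cast_nonneg r)

/-- variance bound from the paper's Lemma 11: for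
`ρ = (1−α)·I/D + α·P/r` with `P` a rank-`r` orthogonal projection and the
rotation-invariant probability measure `μ` on the unit sphere of `ℂ^D`, the density
`p(u) = D⟨u,ρu⟩` satisfies `∫ p² dμ − (∫ p dμ)² ≤ α²/r`. -/
theorem born_density_variance (D r : ℕ) (hD : 1 ≤ D) (hr : 1 ≤ r) (hrD : r ≤ D)
    (α : ℝ) (hα0 : 0 ≤ α) (hα1 : α ≤ 1)
    (P : Matrix (Fin D) (Fin D) ℂ) (hherm : P.IsHermitian) (hproj : P * P = P)
    (hrank : P.rank = r)
    (μ : Measure (EuclideanSpace ℂ (Fin D))) [IsProbabilityMeasure μ]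
    (hsupp : ∀ᵐ u ∂μ, ‖u‖ = 1)
    (hinv : ∀ U : EuclideanSpace ℂ (Fin D) ≃ₗᵢ[ℂ] EuclideanSpace ℂ (Fin D),
      μ.map U = μ)
    (ρ : Matrix (Fin D) (Fin D) ℂ)
    (hρ : ρ = ((1 - α) / D : ℝ) • (1 : Matrix (Fin D) (Fin D) ℂ) + (α / r : ℝ) • P) :
    (∫ u, ((D : ℝ) * (expval ρ u).re) ^ 2 ∂μ)
        - (∫ u, (D : ℝ) * (expval ρ u).re ∂μ) ^ 2
      ≤ α ^ 2 / r :=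
  born_density_variance_general D r α P hherm hproj hrank μ hsupp hinv ρ hρ
end

section
/- Let D ≥ 1, let ρ be a density matrix on ℂ^D, let B > 0 and ε ∈ (0,1], and let O be a Hermitian D×D matrix with tr(O²) ≤ B and eigendecomposition O = Σ_{i=1}^D w_i · ω_i ω_i*, where (ω_i) is an orthonormal basis of eigenvectors with eigenvalues w_i ∈ ℝ. Suppose for every index i with |w_i| > ε/2 we have a real number ô_i with |ô_i − ⟨ω_i, ρ ω_i⟩| ≤ ε²/(4B). Then |Σ_{i : |w_i| > ε/2} w_i ô_i − tr(O ρ)| ≤ ε. -/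
open MeasureTheory Matrix
open scoped ComplexOrder

/-
Write `p_i = ⟨ω_i, ρ ω_i⟩`. Since `(ω_i)` is an orthonormal basis of eigenvectors of `O`, computing
traces in it gives `tr(Oρ) = Σ w_i p_i` and `tr(O²) = Σ w_i²`, while positivity and normalisation
of `ρ` make `p` a probability vector. Dropping the indices with `|w_i| ≤ ε/2` costs at most
`ε/2 · Σ p_i = ε/2`. On the kept indices `|w_i| < 2 w_i² / ε`, so their weights sum to at most
`2B/ε`, and the estimation errors `ε²/(4B)` contribute at most `ε/2` in total.
-/

open Finset

lemma abs_sum_mul_sub_le {ι : Type*} (s : Finset ι) (w p q : ι → ℝ) {δ : ℝ}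
    (hq : ∀ i ∈ s, |q i - p i| ≤ δ) :
    |∑ i ∈ s, w i * q i - ∑ i ∈ s, w i * p i| ≤ (∑ i ∈ s, |w i|) * δ := by
  rw [← sum_sub_distrib, sum_mul]
  refine (abs_sum_le_sum_abs _ _).trans (sum_le_sum fun i hi => ?_)
  rw [← mul_sub, abs_mul]
  exact mul_le_mul_of_nonneg_left (hq i hi) (abs_nonneg _)

section TruncatedSum

variable {ι : Type*} [Fintype ι]

lemma sum_abs_filter_lt_le_sum_sq_div (w : ι → ℝ) {t : ℝ} (ht : 0 < t) :
    ∑ i ∈ univ.filter (fun i => t < |w i|), |w i| ≤ (∑ i, w i ^ 2) / t := by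
  rw [le_div_iff₀ ht, sum_mul]
  calc ∑ i ∈ univ.filter (fun i => t < |w i|), |w i| * t
      ≤ ∑ i ∈ univ.filter (fun i => t < |w i|), w i ^ 2 := by
        refine sum_le_sum fun i hi => ?_
        rw [← sq_abs, sq]
        exact mul_le_mul_of_nonneg_left (mem_filter.mp hi).2.le (abs_nonneg _)
    _ ≤ ∑ i, w i ^ 2 :=
        sum_le_sum_of_subset_of_nonneg (subset_univ _) fun i _ _ => sq_nonneg _

lemma abs_sum_filter_not_lt_mul_le (w p : ι → ℝ) (hp : ∀ i, 0 ≤ p i) {t : ℝ} (ht : 0 ≤ t) :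
    |∑ i ∈ univ.filter (fun i => ¬ t < |w i|), w i * p i| ≤ t * ∑ i, p i := by
  calc |∑ i ∈ univ.filter (fun i => ¬ t < |w i|), w i * p i|
      ≤ ∑ i ∈ univ.filter (fun i => ¬ t < |w i|), |w i| * p i := by
        refine (abs_sum_le_sum_abs _ _).trans_eq (sum_congr rfl fun i _ => ?_)
        rw [abs_mul, abs_of_nonneg (hp i)]
    _ ≤ ∑ i ∈ univ.filter (fun i => ¬ t < |w i|), t * p i :=
        sum_le_sum fun i hi => mul_le_mul_of_nonneg_right (not_lt.mp (mem_filter.mp hi).2) (hp i)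
    _ ≤ ∑ i, t * p i :=
        sum_le_sum_of_subset_of_nonneg (subset_univ _) fun i _ _ => mul_nonneg ht (hp i)
    _ = t * ∑ i, p i := (mul_sum ..).symm

lemma abs_sum_filter_mul_sub_sum_mul_le (w p q : ι → ℝ) {B ε : ℝ}
    (hB : 0 < B) (hε : 0 < ε) (hp : ∀ i, 0 ≤ p i) (hp1 : ∑ i, p i = 1)
    (hw : ∑ i, w i ^ 2 ≤ B) (hq : ∀ i, ε / 2 < |w i| → |q i - p i| ≤ ε ^ 2 / (4 * B)) :
    |∑ i ∈ univ.filter (fun i => ε / 2 < |w i|), w i * q i - ∑ i, w i * p i| ≤ ε := by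
  set S := univ.filter (fun i => ε / 2 < |w i|)
  have hhead : |∑ i ∈ S, w i * q i - ∑ i ∈ S, w i * p i| ≤ ε / 2 :=
    calc _ ≤ (∑ i ∈ S, |w i|) * (ε ^ 2 / (4 * B)) :=
          abs_sum_mul_sub_le S w p q fun i hi => hq i (mem_filter.mp hi).2
      _ ≤ (B / (ε / 2)) * (ε ^ 2 / (4 * B)) := by
          gcongr
          exact (sum_abs_filter_lt_le_sum_sq_div w (by positivity)).trans (by gcongr)
      _ = ε / 2 := by field_simp; ring
  have htail := abs_sum_filter_not_lt_mul_le w p hp (t := ε / 2) (by positivity)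
  rw [hp1, mul_one] at htail
  rw [← sum_filter_add_sum_filter_not univ (fun i => ε / 2 < |w i|)]
  calc _ = |(∑ i ∈ S, w i * q i - ∑ i ∈ S, w i * p i)
          - ∑ i ∈ univ.filter (fun i => ¬ ε / 2 < |w i|), w i * p i| := by congr 1; ring
    _ ≤ ε / 2 + ε / 2 := (abs_sub _ _).trans (add_le_add hhead htail)
    _ = ε := add_halves ε

end TruncatedSum

section

variable {D : ℕ}

lemma toEuclideanLin_outer_apply (u v : EuclideanSpace ℂ (Fin D)) :
    toEuclideanLin (of fun a b => u a * starRingEnd ℂ (u b)) v = inner ℂ u v • u := by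
  ext a
  simp only [toLpLin_apply, PiLp.toLp_apply, mulVec, dotProduct, of_apply, PiLp.smul_apply,
    smul_eq_mul, PiLp.inner_apply, RCLike.inner_apply, Finset.sum_mul]
  exact Finset.sum_congr rfl fun b _ => by ring

lemma toEuclideanLin_sum_smul_outer_apply {ω : Fin D → EuclideanSpace ℂ (Fin D)}
    (hon : Orthonormal ℂ ω) (c : Fin D → ℂ) (j : Fin D) :
    toEuclideanLin (∑ i, c i • of fun a b => ω i a * starRingEnd ℂ (ω i b)) (ω j)
      = c j • ω j := by
  simp only [map_sum, map_smul, LinearMap.sum_apply, LinearMap.smul_apply,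
    toEuclideanLin_outer_apply, orthonormal_iff_ite.mp hon, ite_smul, one_smul, zero_smul,
    smul_ite, smul_zero, Finset.sum_ite_eq', Finset.mem_univ, if_true]

lemma expval_eq_of_toEuclideanLin_apply_eq_smul {A : Matrix (Fin D) (Fin D) ℂ}
    {u : EuclideanSpace ℂ (Fin D)} {c : ℂ} (hu : ‖u‖ = 1) (h : toEuclideanLin A u = c • u) :
    expval A u = c := by
  rw [expval, h, inner_smul_right, inner_self_eq_norm_sq_to_K, hu]
  simp

lemma sum_expval_eq_trace {ω : Fin D → EuclideanSpace ℂ (Fin D)} (hon : Orthonormal ℂ ω)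
    (A : Matrix (Fin D) (Fin D) ℂ) : ∑ i, expval A (ω i) = A.trace := by
  have hspan : ⊤ ≤ Submodule.span ℂ (Set.range ω) :=
    (hon.linearIndependent.span_eq_top_of_card_eq_finrank' (by simp)).ge
  rw [← A.trace_toLin_eq (EuclideanSpace.basisFun (Fin D) ℂ).toBasis,
    ← toEuclideanLin_eq_toLin_orthonormal,
    LinearMap.trace_eq_sum_inner _ (OrthonormalBasis.mk hon hspan), OrthonormalBasis.coe_mk]
  rfl

lemma trace_mul_eq_sum_mul_expval {ω : Fin D → EuclideanSpace ℂ (Fin D)} (hon : Orthonormal ℂ ω)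
    {O : Matrix (Fin D) (Fin D) ℂ} {c : Fin D → ℂ} (hO : ∀ i, toEuclideanLin O (ω i) = c i • ω i)
    (A : Matrix (Fin D) (Fin D) ℂ) : (O * A).trace = ∑ i, c i * expval A (ω i) := by
  rw [trace_mul_comm, ← sum_expval_eq_trace hon]
  refine Finset.sum_congr rfl fun i _ => ?_
  rw [expval, toLpLin_mul_same, LinearMap.comp_apply, hO, map_smul, inner_smul_right, expval]

lemma Matrix.PosSemidef.re_expval_nonneg {A : Matrix (Fin D) (Fin D) ℂ} (hA : A.PosSemidef)
    (u : EuclideanSpace ℂ (Fin D)) : 0 ≤ (expval A u).re :=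
  (isPositive_toEuclideanLin_iff.mpr hA).re_inner_nonneg_right u

end

theorem protocol_II_error_general (D : ℕ)
    (ρ : Matrix (Fin D) (Fin D) ℂ) (hρ : ρ.PosSemidef) (hρtr : ρ.trace = 1)
    (B ε : ℝ) (hB : 0 < B) (hε : 0 < ε)
    (O : Matrix (Fin D) (Fin D) ℂ)
    (w : Fin D → ℝ) (ω : Fin D → EuclideanSpace ℂ (Fin D)) (hon : Orthonormal ℂ ω)
    (hO : O = ∑ i, (w i : ℂ) •
      Matrix.of (fun a b => ω i a * (starRingEnd ℂ) (ω i b)))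
    (htr : ((O * O).trace).re ≤ B)
    (ohat : Fin D → ℝ)
    (hohat : ∀ i, ε / 2 < |w i| → |ohat i - (expval ρ (ω i)).re| ≤ ε ^ 2 / (4 * B)) :
    |∑ i ∈ Finset.univ.filter (fun i => ε / 2 < |w i|), w i * ohat i
        - ((O * ρ).trace).re| ≤ ε := by
  have heig : ∀ i, toEuclideanLin O (ω i) = (w i : ℂ) • ω i :=
    hO ▸ toEuclideanLin_sum_smul_outer_apply hon _
  have hre : ∀ A, ((O * A).trace).re = ∑ i, w i * (expval A (ω i)).re := fun A => by
    simp only [trace_mul_eq_sum_mul_expval hon heig A, Complex.re_sum, Complex.re_ofReal_mul]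
  have hw : ∑ i, w i ^ 2 ≤ B := by
    simp only [sq]
    simpa only [hre O, expval_eq_of_toEuclideanLin_apply_eq_smul (hon.1 _) (heig _),
      Complex.ofReal_re] using htr
  have hp1 : ∑ i, (expval ρ (ω i)).re = 1 := by
    rw [← Complex.re_sum, sum_expval_eq_trace hon, hρtr, Complex.one_re]
  rw [hre ρ]
  exact abs_sum_filter_mul_sub_sum_mul_le w _ ohat hB hε (fun i => hρ.re_expval_nonneg _) hp1 hw
    hohat

/-- error analysis of estimation protocol II in the proof of Eq. (6):
if `O = Σ_i w_i ω_i ω_i*` with `(ω_i)` orthonormal, `tr(O²) ≤ B`, and for each `i` with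
`|w_i| > ε/2` the number `ô_i` approximates `⟨ω_i, ρ ω_i⟩` up to `ε²/(4B)`, then
`|Σ_{i : |w_i| > ε/2} w_i ô_i − tr(Oρ)| ≤ ε`. -/
theorem protocol_II_error (D : ℕ) (hD : 1 ≤ D)
    (ρ : Matrix (Fin D) (Fin D) ℂ) (hρ : ρ.PosSemidef) (hρtr : ρ.trace = 1)
    (B ε : ℝ) (hB : 0 < B) (hε : 0 < ε) (hε1 : ε ≤ 1)
    (O : Matrix (Fin D) (Fin D) ℂ)
    (w : Fin D → ℝ) (ω : Fin D → EuclideanSpace ℂ (Fin D)) (hon : Orthonormal ℂ ω)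
    (hO : O = ∑ i, (w i : ℂ) •
      Matrix.of (fun a b => ω i a * (starRingEnd ℂ) (ω i b)))
    (htr : ((O * O).trace).re ≤ B)
    (ohat : Fin D → ℝ)
    (hohat : ∀ i, ε / 2 < |w i| → |ohat i - (expval ρ (ω i)).re| ≤ ε ^ 2 / (4 * B)) :
    |∑ i ∈ Finset.univ.filter (fun i => ε / 2 < |w i|), w i * ohat i
        - ((O * ρ).trace).re| ≤ ε :=
  protocol_II_error_general D ρ hρ hρtr B ε hB hε O w ω hon hO htr ohat hohat
end
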